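/- arXiv:1907.10825 — 6 statements merged into one kernel-verified Lean document; each statement's English description precedes it below -/
import Mathlib

section
/- Let g = (I,E) be a directed graph. Then the base polytope P(z_g) = { x ∈ ℝ^I : ∑_{i∈I} x_i = 0, and ∑_{i∈A} x_i ≤ 0 for every lower half A of g } equals the convex cone generated by the vectors e_i − e_j over all edges (j,i) of g, where e_i are standard basis vectors of ℝ^I. -/
set_option linter.unusedSectionVars false
set_option linter.unusedVariables false
set_option maxHeartbeats 1000000

def IsLowerHalf {I : Type*} (E : Finset (I × I)) (S : Finset I) : Prop :=
  ∀ e ∈ E, e.2 ∈ S → e.1 ∈ S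

/-- The base polytope of the extended submodular function `z_g`. -/
def basePolytope {I : Type*} [Fintype I] (E : Finset (I × I)) : Set (I → ℝ) :=
  {x | (∑ i, x i) = 0 ∧ ∀ A : Finset I, IsLowerHalf E A → (∑ i ∈ A, x i) ≤ 0}

/-- The cone generated by the vectors `e_i - e_j` over the edges `(j,i)` of `g`. -/
def dgCone {I : Type*} [Fintype I] [DecidableEq I] (E : Finset (I × I)) : Set (I → ℝ) :=
  {x | ∃ lam : I × I → ℝ, (∀ e, 0 ≤ lam e) ∧
    x = ∑ e ∈ E, lam e • (Pi.single e.2 (1 : ℝ) - Pi.single e.1 (1 : ℝ))}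

section Aux

variable {I : Type*} [Fintype I] [DecidableEq I] {E : Finset (I × I)}

lemma dgCone_zero : (0 : I → ℝ) ∈ dgCone E :=
  ⟨0, fun _ => le_refl 0, by simp⟩

lemma dgCone_add {x y : I → ℝ} (hx : x ∈ dgCone E) (hy : y ∈ dgCone E) :
    x + y ∈ dgCone E := by
  obtain ⟨l1, h1, rfl⟩ := hx
  obtain ⟨l2, h2, rfl⟩ := hy
  exact ⟨l1 + l2, fun e => add_nonneg (h1 e) (h2 e), by
    rw [← Finset.sum_add_distrib]
    exact Finset.sum_congr rfl fun e _ => by simp [add_smul]⟩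

lemma dgCone_gen {e : I × I} (he : e ∈ E) {c : ℝ} (hc : 0 ≤ c) :
    c • (Pi.single e.2 (1 : ℝ) - Pi.single e.1 1) ∈ dgCone E := by
  refine ⟨fun e' => if e' = e then c else 0, fun e' => by positivity, ?_⟩
  simp only [ite_smul, zero_smul]
  rw [Finset.sum_ite_eq' E e]
  simp [he]

lemma dgCone_path {j i : I} (h : Relation.ReflTransGen (fun a b => (a, b) ∈ E) j i)
    {c : ℝ} (hc : 0 ≤ c) :
    c • (Pi.single i (1 : ℝ) - Pi.single j 1) ∈ dgCone E := by
  induction h with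
  | refl => simpa using dgCone_zero
  | @tail b k h' he IH =>
      have hsplit : ((Pi.single k (1 : ℝ) : I → ℝ) - Pi.single j 1)
          = ((Pi.single k (1 : ℝ) : I → ℝ) - Pi.single b 1)
            + ((Pi.single b (1 : ℝ) : I → ℝ) - Pi.single j 1) := by
        abel
      rw [hsplit, smul_add]
      exact dgCone_add (dgCone_gen (e := (b, k)) he hc) IH

lemma lowerHalf_of_reach {A : Finset I} (hA : IsLowerHalf E A) {j i : I}
    (h : Relation.ReflTransGen (fun a b => (a, b) ∈ E) j i) (hi : i ∈ A) : j ∈ A := by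
  induction h with
  | refl => exact hi
  | @tail b c h' he IH => exact IH (hA (b, c) he hi)

lemma lowerHalf_union {A B : Finset I} (hA : IsLowerHalf E A) (hB : IsLowerHalf E B) :
    IsLowerHalf E (A ∪ B) := by
  intro e he h2
  rcases Finset.mem_union.mp h2 with h | h
  · exact Finset.mem_union.mpr (Or.inl (hA e he h))
  · exact Finset.mem_union.mpr (Or.inr (hB e he h))

lemma lowerHalf_inter {A B : Finset I} (hA : IsLowerHalf E A) (hB : IsLowerHalf E B) :
    IsLowerHalf E (A ∩ B) := by
  intro e he h2
  rcases Finset.mem_inter.mp h2 with ⟨h1, h2'⟩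
  exact Finset.mem_inter.mpr ⟨hA e he h1, hB e he h2'⟩

lemma sum_single_mem (A : Finset I) (a : I) :
    ∑ i ∈ A, (Pi.single a (1 : ℝ) : I → ℝ) i = if a ∈ A then 1 else 0 := by
  simp only [Pi.single_apply]
  rw [Finset.sum_ite_eq' A a]

lemma dgCone_subset_basePolytope : dgCone E ⊆ basePolytope E := by
  rintro x ⟨lam, hlam, rfl⟩
  have key : ∀ A : Finset I,
      ∑ i ∈ A, ((∑ e ∈ E, lam e • ((Pi.single e.2 (1 : ℝ) : I → ℝ) - Pi.single e.1 1) : I → ℝ)) i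
        = ∑ e ∈ E, lam e * ((if e.2 ∈ A then (1 : ℝ) else 0) - (if e.1 ∈ A then 1 else 0)) := by
    intro A
    simp only [Finset.sum_apply, Pi.smul_apply, Pi.sub_apply, smul_eq_mul]
    rw [Finset.sum_comm]
    refine Finset.sum_congr rfl fun e _ => ?_
    rw [← Finset.mul_sum, Finset.sum_sub_distrib, sum_single_mem, sum_single_mem]
  constructor
  · rw [key Finset.univ]
    simp
  · intro A hA
    rw [key A]
    apply Finset.sum_nonpos
    intro e he
    by_cases h2 : e.2 ∈ A
    · have h1 : e.1 ∈ A := hA e he h2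
      simp [h1, h2]
    · by_cases h1 : e.1 ∈ A <;>
        · simp only [h1, h2, if_true, if_false]
          nlinarith [hlam e]

end Aux

theorem basePolytope_eq_dgCone {I : Type*} [Fintype I] [DecidableEq I]
    (E : Finset (I × I)) (hE : ∀ e ∈ E, e.1 ≠ e.2) :
    basePolytope E = dgCone E := by
  classical
  apply Set.Subset.antisymm ?_ dgCone_subset_basePolytope
  set M := Fintype.card (Finset I) with hM
  set sp : (I → ℝ) → ℕ := fun y => (Finset.univ.filter (fun v => y v ≠ 0)).card with hsp
  set nt : (I → ℝ) → ℕ := fun y => ((Finset.univ : Finset (Finset I)).filter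
      (fun A => IsLowerHalf E A ∧ (∑ i ∈ A, y i) ≠ 0)).card with hnt
  have key : ∀ n : ℕ, ∀ y : I → ℝ, y ∈ basePolytope E →
      sp y * (M + 1) + nt y ≤ n → y ∈ dgCone E := by
    intro n
    induction n with
    | zero =>
        intro y hy hn
        have hsp0 : sp y = 0 := by
          rcases Nat.mul_eq_zero.mp (Nat.eq_zero_of_add_eq_zero_right (Nat.le_zero.mp hn)) with h | h
          · exact h
          · omega
        have hy0 : y = 0 := by
          funext v
          by_contra hv
          have hmem : v ∈ Finset.univ.filter (fun v => y v ≠ 0) :=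
            Finset.mem_filter.mpr ⟨Finset.mem_univ v, by simpa using hv⟩
          rw [Finset.card_eq_zero.mp hsp0] at hmem
          exact absurd hmem (Finset.notMem_empty v)
        rw [hy0]; exact dgCone_zero
    | succ n IH =>
        intro y hy hn
        by_cases hy0 : y = 0
        · rw [hy0]; exact dgCone_zero
        -- find a positive coordinate
        obtain ⟨i0, hi0⟩ : ∃ i0, 0 < y i0 := by
          by_contra h
          push_neg at h
          exact hy0 (funext fun v =>
            (Finset.sum_eq_zero_iff_of_nonpos (fun i _ => h i)).mp hy.1 v (Finset.mem_univ v))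
        -- ancestors of i0
        set Anc : Finset I :=
          Finset.univ.filter (fun v => Relation.ReflTransGen (fun a b => (a, b) ∈ E) v i0)
          with hAnc
        have hAncLH : IsLowerHalf E Anc := by
          intro e he h2
          simp only [hAnc, Finset.mem_filter, Finset.mem_univ, true_and] at h2 ⊢
          exact Relation.ReflTransGen.head he h2
        have hi0Anc : i0 ∈ Anc := by
          simp only [hAnc, Finset.mem_filter, Finset.mem_univ, true_and]
          exact Relation.ReflTransGen.refl
        -- union of tight lower halves avoiding i0
        set U : Finset I := ((Finset.univ : Finset (Finset I)).filter
            (fun A => IsLowerHalf E A ∧ (∑ i ∈ A, y i) = 0 ∧ i0 ∉ A)).sup id with hUdef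
        have hU : IsLowerHalf E U ∧ (∑ i ∈ U, y i) = 0 ∧ i0 ∉ U := by
          rw [hUdef]
          apply Finset.sup_induction
            (p := fun A : Finset I => IsLowerHalf E A ∧ (∑ i ∈ A, y i) = 0 ∧ i0 ∉ A)
          · exact ⟨fun e _ h => absurd h (Finset.notMem_empty _), by simp,
              Finset.notMem_empty _⟩
          · rintro A ⟨hA1, hA2, hA3⟩ B ⟨hB1, hB2, hB3⟩
            simp only [Finset.sup_eq_union]
            refine ⟨lowerHalf_union hA1 hB1, ?_, ?_⟩
            · have hmod := Finset.sum_union_inter (s₁ := A) (s₂ := B) (f := y)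
              have hle1 := hy.2 (A ∪ B) (lowerHalf_union hA1 hB1)
              have hle2 := hy.2 (A ∩ B) (lowerHalf_inter hA1 hB1)
              linarith
            · simp only [Finset.mem_union]
              tauto
          · intro A hA
            simpa using (Finset.mem_filter.mp hA).2
        have hTsub : ∀ A : Finset I, IsLowerHalf E A → (∑ i ∈ A, y i) = 0 → i0 ∉ A → A ⊆ U := by
          intro A h1 h2 h3
          exact Finset.le_sup (f := id)
            (Finset.mem_filter.mpr ⟨Finset.mem_univ A, h1, h2, h3⟩)
        -- find a negative coordinate j in Anc \ U
        have hsumAnc : ∑ i ∈ Anc \ U, y i ≤ 0 := by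
          have hD : (∑ i ∈ Anc ∪ U, y i) ≤ 0 := hy.2 _ (lowerHalf_union hAncLH hU.1)
          have heq : ∑ i ∈ Anc \ U, y i + ∑ i ∈ U, y i = ∑ i ∈ Anc ∪ U, y i := by
            rw [← Finset.sum_union Finset.sdiff_disjoint, Finset.sdiff_union_self_eq_union]
          linarith [hU.2.1]
        have hi0mem : i0 ∈ Anc \ U := Finset.mem_sdiff.mpr ⟨hi0Anc, hU.2.2⟩
        obtain ⟨j, hjmem, hyj⟩ : ∃ j ∈ Anc \ U, y j < 0 := by
          by_contra h
          push_neg at h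
          have := Finset.single_le_sum (f := y) (fun i hi => h i hi) hi0mem
          linarith
        have hjAnc : Relation.ReflTransGen (fun a b => (a, b) ∈ E) j i0 := by
          have := (Finset.mem_sdiff.mp hjmem).1
          simpa only [hAnc, Finset.mem_filter, Finset.mem_univ, true_and] using this
        have hjU : j ∉ U := (Finset.mem_sdiff.mp hjmem).2
        have hji0 : j ≠ i0 := fun h => by rw [h] at hyj; linarith
        -- separating lower halves are strictly negative
        set F : Finset (Finset I) := (Finset.univ : Finset (Finset I)).filter
            (fun A => IsLowerHalf E A ∧ j ∈ A ∧ i0 ∉ A) with hF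
        have hFneg : ∀ A ∈ F, (∑ i ∈ A, y i) < 0 := by
          intro A hA
          simp only [hF, Finset.mem_filter, Finset.mem_univ, true_and] at hA
          rcases lt_or_eq_of_le (hy.2 A hA.1) with h | h
          · exact h
          · exact absurd (hTsub A hA.1 h hA.2.2 hA.2.1) hjU
        -- epsilon
        set es : Finset ℝ :=
          insert (y i0) (insert (-y j) (F.image (fun A => -∑ i ∈ A, y i))) with hes
        have hesne : es.Nonempty := ⟨y i0, by simp [hes]⟩
        set ε : ℝ := es.min' hesne with hεdef
        have hεmem : ε ∈ es := es.min'_mem hesne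
        have hεpos : 0 < ε := by
          rcases Finset.mem_insert.mp hεmem with h | h
          · rw [h]; exact hi0
          · rcases Finset.mem_insert.mp h with h | h
            · rw [h]; linarith
            · obtain ⟨A, hA, hAe⟩ := Finset.mem_image.mp h
              rw [← hAe]
              linarith [hFneg A hA]
        have hεi0 : ε ≤ y i0 := Finset.min'_le _ _ (by simp [hes])
        have hεj : ε ≤ -y j := Finset.min'_le _ _ (by simp [hes])
        have hεF : ∀ A ∈ F, ε ≤ -∑ i ∈ A, y i := fun A hA =>
          Finset.min'_le _ _ (by
            simp only [hes, Finset.mem_insert, Finset.mem_image]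
            right; right; exact ⟨A, hA, rfl⟩)
        -- the new point
        set d : I → ℝ := (Pi.single i0 (1 : ℝ) : I → ℝ) - Pi.single j 1 with hd
        set y' : I → ℝ := y - ε • d with hy'
        have hy'app : ∀ v, y' v
            = y v - ε * ((if v = i0 then (1 : ℝ) else 0) - (if v = j then 1 else 0)) := by
          intro v
          simp [hy', hd, Pi.single_apply]
        have hsumA : ∀ A : Finset I, ∑ i ∈ A, y' i
            = ∑ i ∈ A, y i
              - ε * ((if i0 ∈ A then (1 : ℝ) else 0) - (if j ∈ A then 1 else 0)) := by
          intro A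
          rw [Finset.sum_congr rfl (fun v _ => hy'app v), Finset.sum_sub_distrib,
            ← Finset.mul_sum, Finset.sum_sub_distrib, Finset.sum_ite_eq' A i0,
            Finset.sum_ite_eq' A j]
        -- y' is in the base polytope
        have hmemP : y' ∈ basePolytope E := by
          constructor
          · have h := hsumA Finset.univ
            simp only [Finset.mem_univ, if_true] at h
            rw [h, hy.1]; ring
          · intro A hA
            rw [hsumA A]
            by_cases hi0A : i0 ∈ A
            · have hjA := lowerHalf_of_reach hA hjAnc hi0A
              simp only [hi0A, hjA, if_true]
              simpa using hy.2 A hA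
            · by_cases hjA : j ∈ A
              · have hAF : A ∈ F :=
                  Finset.mem_filter.mpr ⟨Finset.mem_univ A, hA, hjA, hi0A⟩
                have := hεF A hAF
                simp only [hi0A, hjA, if_true, if_false]
                linarith
              · simp only [hi0A, hjA, if_false]
                simpa using hy.2 A hA
        -- tight sets stay unchanged
        have htight : ∀ A : Finset I, IsLowerHalf E A → (∑ i ∈ A, y i) = 0 →
            ∑ i ∈ A, y' i = ∑ i ∈ A, y i := by
          intro A hA h0
          rw [hsumA A]
          by_cases hi0A : i0 ∈ A
          · have hjA := lowerHalf_of_reach hA hjAnc hi0A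
            simp [hi0A, hjA]
          · have hjA : j ∉ A := by
              intro hjA
              have hAF : A ∈ F :=
                Finset.mem_filter.mpr ⟨Finset.mem_univ A, hA, hjA, hi0A⟩
              linarith [hFneg A hAF]
            simp [hi0A, hjA]
        -- support and non-tight monotonicity
        have hsupp : Finset.univ.filter (fun v => y' v ≠ 0)
            ⊆ Finset.univ.filter (fun v => y v ≠ 0) := by
          intro v hv
          simp only [Finset.mem_filter, Finset.mem_univ, true_and] at hv ⊢
          intro hyv
          by_cases hvi0 : v = i0
          · rw [hvi0] at hyv; linarith
          · by_cases hvj : v = j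
            · rw [hvj] at hyv; linarith
            · apply hv
              rw [hy'app v]
              simp [hvi0, hvj, hyv]
        have hntsub : (Finset.univ : Finset (Finset I)).filter
              (fun A => IsLowerHalf E A ∧ (∑ i ∈ A, y' i) ≠ 0)
            ⊆ (Finset.univ : Finset (Finset I)).filter
              (fun A => IsLowerHalf E A ∧ (∑ i ∈ A, y i) ≠ 0) := by
          intro A hA
          simp only [Finset.mem_filter, Finset.mem_univ, true_and] at hA ⊢
          refine ⟨hA.1, fun h0 => hA.2 ?_⟩
          rw [htight A hA.1 h0, h0]
        have hspy' : sp y' ≤ sp y := Finset.card_le_card hsupp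
        have hnty' : nt y' ≤ nt y := Finset.card_le_card hntsub
        have hntM : nt y' ≤ M := by
          rw [hnt, hM]
          exact le_trans (Finset.card_filter_le _ _) (le_of_eq (Finset.card_univ))
        -- strict decrease
        have hstrict : sp y' < sp y ∨ nt y' < nt y := by
          rcases Finset.mem_insert.mp hεmem with h | h
          · left
            apply Finset.card_lt_card
            rw [Finset.ssubset_iff_of_subset hsupp]
            refine ⟨i0, Finset.mem_filter.mpr ⟨Finset.mem_univ _, by positivity⟩, ?_⟩
            simp only [Finset.mem_filter, Finset.mem_univ, true_and, not_not]
            rw [hy'app i0]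
            simp only [eq_self_iff_true, if_true, Ne.symm hji0, if_false]
            linarith [h]
          · rcases Finset.mem_insert.mp h with h | h
            · left
              apply Finset.card_lt_card
              rw [Finset.ssubset_iff_of_subset hsupp]
              refine ⟨j, Finset.mem_filter.mpr ⟨Finset.mem_univ _, by
                intro h'; rw [h'] at hyj; linarith⟩, ?_⟩
              simp only [Finset.mem_filter, Finset.mem_univ, true_and, not_not]
              rw [hy'app j]
              simp only [eq_self_iff_true, if_true, hji0, if_false]
              linarith [h]
            · right
              obtain ⟨A0, hA0F, hA0e⟩ := Finset.mem_image.mp h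
              have hA0 := Finset.mem_filter.mp hA0F
              apply Finset.card_lt_card
              rw [Finset.ssubset_iff_of_subset hntsub]
              refine ⟨A0, Finset.mem_filter.mpr ⟨Finset.mem_univ _, hA0.2.1, by
                linarith [hFneg A0 hA0F]⟩, ?_⟩
              simp only [Finset.mem_filter, Finset.mem_univ, true_and, not_and, not_not]
              intro _
              rw [hsumA A0]
              simp only [hA0.2.2.2, hA0.2.2.1, if_false, if_true]
              linarith [hA0e]
        -- measure decreases
        have hμ : sp y' * (M + 1) + nt y' ≤ n := by
          rcases hstrict with h | h
          · have h1 : sp y' + 1 ≤ sp y := h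
            have h2 : (sp y' + 1) * (M + 1) ≤ sp y * (M + 1) :=
              Nat.mul_le_mul_right _ h1
            have h3 : (sp y' + 1) * (M + 1) = sp y' * (M + 1) + (M + 1) := by ring
            have h4 : sp y * (M + 1) + nt y ≤ n + 1 := hn
            linarith [hntM]
          · have h2 : sp y' * (M + 1) ≤ sp y * (M + 1) :=
              Nat.mul_le_mul_right _ hspy'
            have h4 : sp y * (M + 1) + nt y ≤ n + 1 := hn
            linarith
        have hy'cone := IH y' hmemP hμ
        have hdecomp : y = y' + ε • d := by rw [hy']; ring
        rw [hdecomp]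
        exact dgCone_add hy'cone (dgCone_path hjAnc hεpos.le)
  intro x hx
  exact key (sp x * (M + 1) + nt x) x hx (le_refl _)
end

section
/- Let g = (I,E) be a directed graph. Suppose x ∈ ℝ^I satisfies ∑_{i∈I} x_i = 0 and ∑_{a∈A} x_a ≤ 0 for every lower half A of g. Then there exist nonnegative reals λ_{ji} for each edge (j,i) ∈ E such that x = ∑_{(j,i)∈E} λ_{ji}(e_i − e_j). -/
open Finset

noncomputable def dotR {I : Type*} [Fintype I] (u w : I → ℝ) : ℝ := ∑ i, u i * w i

lemma dotR_sub_left {I : Type*} [Fintype I] (u v w : I → ℝ) :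
    dotR (u - v) w = dotR u w - dotR v w := by
  simp [dotR, sub_mul, Finset.sum_sub_distrib]

lemma dotR_smul_left {I : Type*} [Fintype I] (c : ℝ) (u w : I → ℝ) :
    dotR (c • u) w = c * dotR u w := by
  simp [dotR, Finset.mul_sum, mul_assoc]

lemma dotR_sub_right {I : Type*} [Fintype I] (u v w : I → ℝ) :
    dotR u (v - w) = dotR u v - dotR u w := by
  simp [dotR, mul_sub, Finset.sum_sub_distrib]

lemma dotR_smul_right {I : Type*} [Fintype I] (c : ℝ) (u w : I → ℝ) :
    dotR u (c • w) = c * dotR u w := by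
  simp [dotR, Finset.mul_sum]; ring_nf; simp [mul_comm, mul_left_comm]

lemma dotR_self_pos {I : Type*} [Fintype I] {x : I → ℝ} (hx : x ≠ 0) : 0 < dotR x x := by
  obtain ⟨i, hi⟩ : ∃ i, x i ≠ 0 := by
    by_contra h; push_neg at h; exact hx (funext h)
  exact Finset.sum_pos' (fun j _ => mul_self_nonneg _)
    ⟨i, Finset.mem_univ i, mul_self_pos.mpr hi⟩

lemma farkasR {α : Type*} [DecidableEq α] {I : Type*} [Fintype I]
    (s : Finset α) (v : α → I → ℝ) (x : I → ℝ) :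
    (∃ μ : α → ℝ, (∀ a, 0 ≤ μ a) ∧ x = ∑ a ∈ s, μ a • v a) ∨
    (∃ y : I → ℝ, (∀ a ∈ s, dotR (v a) y ≤ 0) ∧ 0 < dotR x y) := by
  induction s using Finset.induction_on generalizing v x with
  | empty =>
    by_cases hx : x = 0
    · exact Or.inl ⟨0, fun a => le_refl 0, by simp [hx]⟩
    · exact Or.inr ⟨x, by simp, dotR_self_pos hx⟩
  | @insert a s ha ih =>
    rcases ih v x with ⟨μ, hμ, hx⟩ | ⟨y, hy, hxy⟩
    · refine Or.inl ⟨Function.update μ a 0, ?_, ?_⟩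
      · intro b
        rcases eq_or_ne b a with rfl | hb
        · simp
        · simp [Function.update_of_ne hb, hμ b]
      · rw [Finset.sum_insert ha, Function.update_self, zero_smul, zero_add, hx]
        exact Finset.sum_congr rfl fun b hb =>
          by rw [Function.update_of_ne (ne_of_mem_of_not_mem hb ha)]
    · by_cases hva : dotR (v a) y ≤ 0
      · refine Or.inr ⟨y, ?_, hxy⟩
        intro b hb
        rcases Finset.mem_insert.mp hb with rfl | hb
        · exact hva
        · exact hy b hb
      · push_neg at hva
        have hvane : dotR (v a) y ≠ 0 := ne_of_gt hva
        set q : α → ℝ := fun b => dotR (v b) y / dotR (v a) y with hq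
        set p : ℝ := dotR x y / dotR (v a) y with hp
        set v' : α → I → ℝ := fun b => v b - q b • v a with hv'
        set x' : I → ℝ := x - p • v a with hx'
        rcases ih v' x' with ⟨μ, hμ, hxx⟩ | ⟨z, hz, hxz⟩
        · -- x = ∑ μ b • v b + c • v a
          set c : ℝ := p - ∑ b ∈ s, μ b * q b with hc
          have hc0 : 0 ≤ c := by
            have hp0 : 0 < p := div_pos hxy hva
            have hsum0 : (∑ b ∈ s, μ b * q b) ≤ 0 := by
              apply Finset.sum_nonpos
              intro b hb
              exact mul_nonpos_of_nonneg_of_nonpos (hμ b)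
                (div_nonpos_of_nonpos_of_nonneg (hy b hb) (le_of_lt hva))
            have := le_trans hsum0 (le_of_lt hp0)
            simpa [hc, sub_nonneg] using this
          have hxid : x = (∑ b ∈ s, μ b • v b) + c • v a := by
            have h1 : x = x' + p • v a := by simp [hx']
            have h2 : (∑ b ∈ s, μ b • v' b)
                = (∑ b ∈ s, μ b • v b) - (∑ b ∈ s, μ b * q b) • v a := by
              rw [Finset.sum_smul, ← Finset.sum_sub_distrib]
              exact Finset.sum_congr rfl fun b _ => by rw [smul_sub, smul_smul]
            rw [h1, hxx, h2, hc, sub_smul]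
            abel
          refine Or.inl ⟨Function.update μ a c, ?_, ?_⟩
          · intro b
            rcases eq_or_ne b a with rfl | hb
            · simpa using hc0
            · simp [Function.update_of_ne hb, hμ b]
          · rw [Finset.sum_insert ha, Function.update_self, hxid, add_comm]
            congr 1
            exact Finset.sum_congr rfl fun b hb =>
              by rw [Function.update_of_ne (ne_of_mem_of_not_mem hb ha)]
        · -- dual vector w
          set w : I → ℝ := z - (dotR (v a) z / dotR (v a) y) • y with hw
          refine Or.inr ⟨w, ?_, ?_⟩
          · intro b hb
            rcases Finset.mem_insert.mp hb with rfl | hb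
            · rw [hw, dotR_sub_right, dotR_smul_right,
                div_mul_cancel₀ _ hvane, sub_self]
            · have h1 := hz b hb
              rw [hv'] at h1
              simp only [dotR_sub_left, dotR_smul_left] at h1
              rw [hw, dotR_sub_right, dotR_smul_right]
              calc dotR (v b) z - dotR (v a) z / dotR (v a) y * dotR (v b) y
                  = dotR (v b) z - q b * dotR (v a) z := by rw [hq]; ring
                _ ≤ 0 := h1
          · rw [hx'] at hxz
            simp only [dotR_sub_left, dotR_smul_left] at hxz
            rw [hw, dotR_sub_right, dotR_smul_right]
            calc (0:ℝ) < dotR x z - p * dotR (v a) z := hxz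
              _ = dotR x z - dotR (v a) z / dotR (v a) y * dotR x y := by rw [hp]; ring

lemma layerCake {I : Type*} [Fintype I] [DecidableEq I] (E : Finset (I × I)) (x : I → ℝ)
    (hsum : (∑ i, x i) = 0)
    (hlow : ∀ A : Finset I, IsLowerHalf E A → (∑ a ∈ A, x a) ≤ 0) :
    ∀ n : ℕ, ∀ y : I → ℝ, (Finset.univ.image y).card ≤ n →
      (∀ e ∈ E, y e.2 ≤ y e.1) → (∑ i, x i * y i) ≤ 0 := by
  intro n
  induction n with
  | zero =>
    intro y hc _
    have h0 : Finset.univ.image y = ∅ := Finset.card_eq_zero.mp (Nat.le_zero.mp hc)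
    have huniv : (Finset.univ : Finset I) = ∅ := Finset.image_eq_empty.mp h0
    rw [huniv, Finset.sum_empty]
  | succ n ih =>
    intro y hc hy
    by_cases h1 : (Finset.univ.image y).card ≤ 1
    · rcases (Finset.univ : Finset I).eq_empty_or_nonempty with hI | ⟨i0, _⟩
      · rw [hI, Finset.sum_empty]
      · have hconst : ∀ i : I, y i = y i0 := fun i =>
          Finset.card_le_one.mp h1 _ (Finset.mem_image_of_mem y (Finset.mem_univ i))
            _ (Finset.mem_image_of_mem y (Finset.mem_univ i0))
        calc (∑ i, x i * y i) = ∑ i, x i * y i0 := by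
              exact Finset.sum_congr rfl fun i _ => by rw [hconst i]
          _ = (∑ i, x i) * y i0 := (Finset.sum_mul _ _ _).symm
          _ = 0 := by rw [hsum, zero_mul]
          _ ≤ 0 := le_rfl
    · push_neg at h1
      have h2 : 2 ≤ (Finset.univ.image y).card := h1
      set s : Finset ℝ := Finset.univ.image y with hs
      have hne : s.Nonempty := Finset.card_pos.mp (by omega)
      set c : ℝ := s.max' hne with hcdef
      have hcs : c ∈ s := s.max'_mem hne
      have hne' : (s.erase c).Nonempty := by
        rw [← Finset.card_pos, Finset.card_erase_of_mem hcs]; omega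
      set c' : ℝ := (s.erase c).max' hne' with hc'def
      have hc's : c' ∈ s.erase c := (s.erase c).max'_mem hne'
      have hc'lt : c' < c :=
        lt_of_le_of_ne (s.le_max' c' (Finset.mem_of_mem_erase hc's))
          (Finset.ne_of_mem_erase hc's)
      set y' : I → ℝ := fun i => min (y i) c' with hy'
      have hmemy : ∀ i, y i ∈ s := fun i => Finset.mem_image_of_mem y (Finset.mem_univ i)
      have hylec : ∀ i, y i ≤ c := fun i => s.le_max' _ (hmemy i)
      have hsmall : ∀ i, y i ≠ c → y i ≤ c' := fun i hi =>
        (s.erase c).le_max' _ (Finset.mem_erase.mpr ⟨hi, hmemy i⟩)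
      -- the top level set
      set B : Finset I := Finset.univ.filter (fun i => c ≤ y i) with hB
      have hBlow : IsLowerHalf E B := by
        intro e he h2mem
        rw [hB, Finset.mem_filter] at h2mem ⊢
        exact ⟨Finset.mem_univ _, le_trans h2mem.2 (hy e he)⟩
      have hsplit : ∀ i, x i * y i = x i * y' i + (if c ≤ y i then (c - c') * x i else 0) := by
        intro i
        by_cases hi : c ≤ y i
        · have hyc : y i = c := le_antisymm (hylec i) hi
          have : y' i = c' := by
            show min (y i) c' = c'
            rw [hyc]; exact min_eq_right (le_of_lt hc'lt)
          rw [if_pos hi, this, hyc]; ring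
        · have hle : y i ≤ c' := hsmall i (fun h => hi (le_of_eq h.symm))
          have : y' i = y i := min_eq_left hle
          rw [if_neg hi, this, add_zero]
      have himg : Finset.univ.image y' ⊆ s.erase c := by
        intro t ht
        rcases Finset.mem_image.mp ht with ⟨i, _, rfl⟩
        by_cases hi : y i ≤ c'
        · have : y' i = y i := min_eq_left hi
          rw [this]
          exact Finset.mem_erase.mpr ⟨ne_of_lt (lt_of_le_of_lt hi hc'lt), hmemy i⟩
        · push_neg at hi
          have hyc : y i = c := by
            by_contra h
            exact absurd (hsmall i h) (not_le.mpr hi)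
          have : y' i = c' := by
            show min (y i) c' = c'
            rw [hyc]; exact min_eq_right (le_of_lt hc'lt)
          rw [this]
          exact Finset.mem_erase.mpr ⟨ne_of_lt hc'lt, Finset.mem_of_mem_erase hc's⟩
      have hcard' : (Finset.univ.image y').card ≤ n := by
        have := Finset.card_le_card himg
        rw [Finset.card_erase_of_mem hcs] at this
        omega
      have hy'edge : ∀ e ∈ E, y' e.2 ≤ y' e.1 := fun e he =>
        min_le_min_right c' (hy e he)
      have hrec := ih y' hcard' hy'edge
      calc (∑ i, x i * y i)
          = (∑ i, x i * y' i) + ∑ i, (if c ≤ y i then (c - c') * x i else 0) := by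
            rw [← Finset.sum_add_distrib]
            exact Finset.sum_congr rfl fun i _ => hsplit i
        _ = (∑ i, x i * y' i) + (c - c') * ∑ a ∈ B, x a := by
            rw [hB, Finset.mul_sum, Finset.sum_filter]
        _ ≤ 0 + 0 := by
            apply add_le_add hrec
            exact mul_nonpos_of_nonneg_of_nonpos (le_of_lt (sub_pos.mpr hc'lt)) (hlow B hBlow)
        _ = 0 := add_zero 0

lemma dotR_single {I : Type*} [Fintype I] [DecidableEq I] (j : I) (y : I → ℝ) :
    dotR (Pi.single j (1:ℝ)) y = y j := by
  simp [dotR, Pi.single_apply, ite_mul]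

theorem basePolytope_subset_dgCone {I : Type*} [Fintype I] [DecidableEq I]
    (E : Finset (I × I)) (hE : ∀ e ∈ E, e.1 ≠ e.2)
    (x : I → ℝ) (hsum : (∑ i, x i) = 0)
    (hlow : ∀ A : Finset I, IsLowerHalf E A → (∑ a ∈ A, x a) ≤ 0) :
    ∃ lam : I × I → ℝ, (∀ e, 0 ≤ lam e) ∧
      x = ∑ e ∈ E, lam e • (Pi.single e.2 (1 : ℝ) - Pi.single e.1 (1 : ℝ)) := by
  rcases farkasR E (fun e => Pi.single e.2 (1:ℝ) - Pi.single e.1 (1:ℝ)) x with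
    ⟨μ, hμ, hx⟩ | ⟨y, hy, hxy⟩
  · exact ⟨μ, hμ, hx⟩
  · exfalso
    have hedge : ∀ e ∈ E, y e.2 ≤ y e.1 := by
      intro e he
      have := hy e he
      rw [dotR_sub_left, dotR_single, dotR_single] at this
      linarith
    have := layerCake E x hsum hlow (Finset.univ.image y).card y le_rfl hedge
    have hlt : (0:ℝ) < ∑ i, x i * y i := hxy
    linarith
end

section
/- Let g = (I,E) be a directed graph. The cone C(g) = Cone{e_i − e_j : (j,i) ∈ E} ⊆ ℝ^I is pointed (contains no line, equivalently 0 is a vertex of C(g)) if and only if g has no directed cycles. -/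
open Finset in
lemma dgCone_apply {I : Type*} [Fintype I] [DecidableEq I] (E : Finset (I × I))
    (lam : I × I → ℝ) (i : I) :
    ((∑ e ∈ E, lam e • (Pi.single e.2 (1 : ℝ) - Pi.single e.1 (1 : ℝ)) : I → ℝ)) i
      = ∑ e ∈ E, lam e * ((if i = e.2 then (1:ℝ) else 0) - (if i = e.1 then (1:ℝ) else 0)) := by
  rw [Finset.sum_apply]
  simp [Pi.single_apply]

open Finset in
lemma dgCone_balance {I : Type*} [Fintype I] [DecidableEq I] (E : Finset (I × I))
    (c : I × I → ℝ) (hc : ∀ e, 0 ≤ c e)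
    (hzero : ∑ e ∈ E, c e • (Pi.single e.2 (1 : ℝ) - Pi.single e.1 (1 : ℝ)) = (0 : I → ℝ))
    (i : I) (e0 : I × I) (he0 : e0 ∈ E) (he0i : e0.2 = i) (hpos : 0 < c e0) :
    ∃ e ∈ E, e.1 = i ∧ 0 < c e := by
  have h := congrFun hzero i
  rw [dgCone_apply] at h
  have key : ∀ e : I × I, c e * ((if i = e.2 then (1:ℝ) else 0) - (if i = e.1 then (1:ℝ) else 0))
      = (if i = e.2 then c e else 0) - (if i = e.1 then c e else 0) := by
    intro e
    split_ifs <;> ring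
  rw [Finset.sum_congr rfl (fun e _ => key e), Finset.sum_sub_distrib] at h
  have h' : (∑ e ∈ E, if i = e.2 then c e else 0) = ∑ e ∈ E, if i = e.1 then c e else 0 := by
    have := sub_eq_zero.mp h
    simpa using this
  have hL : 0 < ∑ e ∈ E, if i = e.2 then c e else 0 := by
    have hle : (if i = e0.2 then c e0 else 0) ≤ ∑ e ∈ E, if i = e.2 then c e else 0 := by
      apply Finset.single_le_sum (f := fun e => if i = e.2 then c e else 0) _ he0
      intro e _
      split
      · exact hc e
      · exact le_rfl
    rw [if_pos he0i.symm] at hle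
    exact lt_of_lt_of_le hpos hle
  rw [h'] at hL
  by_contra hcon
  push_neg at hcon
  have : (∑ e ∈ E, if i = e.1 then c e else 0) ≤ 0 := by
    apply Finset.sum_nonpos
    intro e he
    by_cases h1 : i = e.1
    · rw [if_pos h1]
      exact hcon e he h1.symm
    · rw [if_neg h1]
  exact absurd hL (not_lt.mpr this)

theorem dgCone_pointed_iff_acyclic {I : Type*} [Fintype I] [DecidableEq I]
    (E : Finset (I × I)) (hE : ∀ e ∈ E, e.1 ≠ e.2) :
    (∀ x ∈ dgCone E, -x ∈ dgCone E → x = 0) ↔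
      ¬ ∃ (k : ℕ) (v : ℕ → I), 0 < k ∧ v 0 = v k ∧ ∀ m < k, (v m, v (m + 1)) ∈ E := by
  constructor
  · -- pointed → acyclic
    rintro hpt ⟨k, v, hk, hvk, hedge⟩
    have he01 : (v 0, v 1) ∈ E := hedge 0 hk
    set x : I → ℝ := Pi.single (v 1) (1 : ℝ) - Pi.single (v 0) (1 : ℝ) with hxdef
    have hxC : x ∈ dgCone E := by
      refine ⟨fun e => if e = (v 0, v 1) then 1 else 0, fun e => by dsimp only; split <;> norm_num, ?_⟩
      simp only [ite_smul, one_smul, zero_smul]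
      rw [Finset.sum_ite_eq', if_pos he01]
    have hnegC : -x ∈ dgCone E := by
      refine ⟨fun e => (((Finset.Ico 1 k).filter fun m => (v m, v (m + 1)) = e).card : ℝ),
        fun e => by positivity, ?_⟩
      have h1 : ∀ e ∈ E, ((((Finset.Ico 1 k).filter fun m => (v m, v (m + 1)) = e).card : ℝ))
            • ((Pi.single e.2 (1 : ℝ) - Pi.single e.1 (1 : ℝ) : I → ℝ))
          = ∑ m ∈ (Finset.Ico 1 k).filter (fun m => (v m, v (m + 1)) = e),
              ((Pi.single (v (m + 1)) (1 : ℝ) - Pi.single (v m) (1 : ℝ) : I → ℝ)) := by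
        intro e _
        rw [Nat.cast_smul_eq_nsmul, ← Finset.sum_const]
        apply Finset.sum_congr rfl
        intro m hm
        have := (Finset.mem_filter.mp hm).2
        rw [← this]
      rw [Finset.sum_congr rfl h1,
        Finset.sum_fiberwise_of_maps_to (g := fun m => (v m, v (m + 1)))
          (fun m hm => hedge m (Finset.mem_Ico.mp hm).2)]
      have htel : ∑ m ∈ Finset.Ico 1 k, ((Pi.single (v (m + 1)) (1 : ℝ) - Pi.single (v m) (1 : ℝ) : I → ℝ))
          = ((Pi.single (v k) (1 : ℝ) - Pi.single (v 1) (1 : ℝ) : I → ℝ)) := by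
        rw [Finset.sum_Ico_eq_sum_range]
        have htt := Finset.sum_range_sub (fun i => (Pi.single (v (1 + i)) (1 : ℝ) : I → ℝ)) (k - 1)
        calc ∑ i ∈ Finset.range (k - 1), ((Pi.single (v (1 + i + 1)) (1 : ℝ) - Pi.single (v (1 + i)) (1 : ℝ) : I → ℝ))
            = ∑ i ∈ Finset.range (k - 1), ((Pi.single (v (1 + (i + 1))) (1 : ℝ) - Pi.single (v (1 + i)) (1 : ℝ) : I → ℝ)) := by
              apply Finset.sum_congr rfl; intro i _; rw [show 1 + i + 1 = 1 + (i + 1) by omega]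
          _ = ((Pi.single (v (1 + (k - 1))) (1 : ℝ) - Pi.single (v (1 + 0)) (1 : ℝ) : I → ℝ)) := htt
          _ = ((Pi.single (v k) (1 : ℝ) - Pi.single (v 1) (1 : ℝ) : I → ℝ)) := by
              rw [show 1 + (k - 1) = k by omega]
      rw [htel, ← hvk, hxdef]
      abel
    have hx0 := hpt x hxC hnegC
    have hne : v 0 ≠ v 1 := hE _ he01
    have : x (v 1) = 1 := by
      rw [hxdef]
      simp [Pi.single_apply, hne.symm]
    rw [hx0] at this
    simp at this
  · -- acyclic → pointed
    rintro hacyc x ⟨lam, hlam, hx⟩ ⟨mu, hmu, hmx⟩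
    set c : I × I → ℝ := fun e => lam e + mu e with hcdef
    have hzero : ∑ e ∈ E, c e • (Pi.single e.2 (1 : ℝ) - Pi.single e.1 (1 : ℝ)) = (0 : I → ℝ) := by
      have : ∑ e ∈ E, c e • (Pi.single e.2 (1 : ℝ) - Pi.single e.1 (1 : ℝ))
          = ((∑ e ∈ E, lam e • (Pi.single e.2 (1 : ℝ) - Pi.single e.1 (1 : ℝ)) : I → ℝ))
            + ((∑ e ∈ E, mu e • (Pi.single e.2 (1 : ℝ) - Pi.single e.1 (1 : ℝ)) : I → ℝ)) := by
        rw [← Finset.sum_add_distrib]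
        apply Finset.sum_congr rfl
        intro e _
        rw [hcdef, add_smul]
      rw [this, ← hx, ← hmx]
      abel
    have hcnonneg : ∀ e, 0 ≤ c e := fun e => add_nonneg (hlam e) (hmu e)
    have hczero : ∀ e ∈ E, c e = 0 := by
      by_contra hcon
      push_neg at hcon
      obtain ⟨e0, he0, hne0⟩ := hcon
      have hpos : 0 < c e0 := lt_of_le_of_ne (hcnonneg e0) (Ne.symm hne0)
      -- build an infinite walk with positive-weight edges
      have step : ∀ t : {e : I × I // e ∈ E ∧ 0 < c e},
          ∃ t' : {e : I × I // e ∈ E ∧ 0 < c e}, t'.1.1 = t.1.2 := by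
        rintro ⟨e, he, hce⟩
        obtain ⟨e', he', h1, h2⟩ := dgCone_balance E c hcnonneg hzero e.2 e he rfl hce
        exact ⟨⟨e', he', h2⟩, h1⟩
      choose f hf using step
      set seq : ℕ → {e : I × I // e ∈ E ∧ 0 < c e} := fun n => f^[n] ⟨e0, he0, hpos⟩ with hseqdef
      have hseq : ∀ n, (seq (n + 1)).1.1 = (seq n).1.2 := by
        intro n
        rw [hseqdef]
        simp only [Function.iterate_succ_apply']
        exact hf _
      set w : ℕ → I := fun n => (seq n).1.1 with hwdef
      have hwE : ∀ n, (w n, w (n + 1)) ∈ E := by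
        intro n
        show ((seq n).1.1, (seq (n + 1)).1.1) ∈ E
        rw [hseq n]
        exact (seq n).2.1
      obtain ⟨a, b, hne, hab⟩ := Fintype.exists_ne_map_eq_of_card_lt
        (fun n : Fin (Fintype.card I + 1) => w n) (by simp)
      rcases lt_trichotomy (a : ℕ) (b : ℕ) with hlt | heq | hgt
      · exact hacyc ⟨(b : ℕ) - (a : ℕ), fun t => w ((a : ℕ) + t), by omega,
          by simp only [Nat.add_zero]; rw [show (a : ℕ) + ((b : ℕ) - (a : ℕ)) = (b : ℕ) by omega]; exact hab,
          fun t _ => by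
            dsimp only
            rw [show (a : ℕ) + (t + 1) = ((a : ℕ) + t) + 1 by omega]
            exact hwE _⟩
      · exact hne (Fin.ext heq)
      · exact hacyc ⟨(a : ℕ) - (b : ℕ), fun t => w ((b : ℕ) + t), by omega,
          by simp only [Nat.add_zero]; rw [show (b : ℕ) + ((a : ℕ) - (b : ℕ)) = (a : ℕ) by omega]; exact hab.symm,
          fun t _ => by
            dsimp only
            rw [show (b : ℕ) + (t + 1) = ((b : ℕ) + t) + 1 by omega]
            exact hwE _⟩
    have hlamzero : ∀ e ∈ E, lam e = 0 := by
      intro e he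
      have := hczero e he
      have h1 := hlam e
      have h2 := hmu e
      rw [hcdef] at this
      dsimp only at this
      linarith
    rw [hx]
    apply Finset.sum_eq_zero
    intro e he
    rw [hlamzero e he, zero_smul]
end

section
/- Let g = (I,E) be an acyclic directed graph. Then for all positive integers n, the strict chromatic polynomial and weak chromatic polynomial satisfy reciprocity: (−1)^{|I|} π_g^>(−n) = π_g^≥(n), where π_g^>(n) = |{f : I → [n] : f(u) < f(v) for all (u,v) ∈ E}| and π_g^≥(n) = |{f : I → [n] : f(u) ≤ f(v) for all (u,v) ∈ E}|, with π_g^> extended to negative arguments as a polynomial. -/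
/-!
Sort the vertices by a topological order `ι` of the acyclic graph. A map `f : I → [n]` is
ordered by exactly one linear extension `σ` of the graph once ties between equal values are broken
by `ι` (for weak maps) or by the reverse of `ι` (for strict maps), and the maps ordered by `σ` are,
read along `σ`, the weakly increasing sequences that increase strictly at the descents (resp. the
ascents) of `ι ∘ σ`. Adding to such a sequence the number of earlier weak steps makes it strictly
increasing, so with `|I| = M + 1` and `d σ` the number of descents,
`π^≥(n) = ∑ σ, C(n + M - d σ, M + 1)` and `π^>(n) = ∑ σ, C(n + d σ, M + 1)`.
Reciprocity is then `C(-n + d, k) = (-1)^k C(n + k - 1 - d, k)`, term by term.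
-/

open Finset Function Polynomial
open scoped Nat

theorem Relation.TransGen.exists_path {α : Type*} {r : α → α → Prop} {a b : α}
    (h : TransGen r a b) :
    ∃ (k : ℕ) (v : ℕ → α), 0 < k ∧ v 0 = a ∧ v k = b ∧ ∀ m < k, r (v m) (v (m + 1)) := by
  induction h using Relation.TransGen.head_induction_on with
  | single hab => exact ⟨1, fun m => if m = 0 then _ else _, one_pos, rfl, rfl, by simpa⟩
  | @head a c hac _ ih =>
    obtain ⟨k, v, -, hv0, hvk, hstep⟩ := ih
    refine ⟨k + 1, fun m => if m = 0 then a else v (m - 1), k.succ_pos, rfl, by simpa, ?_⟩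
    rintro (_ | m) hm
    · simpa [hv0]
    · simpa using hstep m (by omega)

theorem exists_equiv_fin_lt_of_acyclic {I : Type*} [Fintype I] (E : Finset (I × I))
    (hacyc : ¬ ∃ (k : ℕ) (v : ℕ → I), 0 < k ∧ v 0 = v k ∧ ∀ m < k, (v m, v (m + 1)) ∈ E) :
    ∃ ι : I ≃ Fin (Fintype.card I), ∀ e ∈ E, ι e.1 < ι e.2 := by
  let r : I → I → Prop := fun x y => (x, y) ∈ E
  have irrefl : ∀ a, ¬ Relation.TransGen r a a := fun a ha =>
    let ⟨k, v, hk, h0, hk', hstep⟩ := ha.exists_path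
    hacyc ⟨k, v, hk, h0.trans hk'.symm, hstep⟩
  let _ : PartialOrder I :=
    { le := Relation.ReflTransGen r
      le_refl := fun _ => .refl
      le_trans := fun _ _ _ => .trans
      le_antisymm := fun a b hab hba => by
        rcases Relation.reflTransGen_iff_eq_or_transGen.mp hab with h | h
        · exact h.symm
        · exact (irrefl a (h.trans_left hba)).elim }
  let _ : Fintype (LinearExtension I) := ‹Fintype I›
  refine ⟨(monoEquivOfFin (LinearExtension I) rfl).symm.toEquiv, fun e he => ?_⟩
  have hlt : e.1 < e.2 :=
    lt_of_le_not_ge (.single he) fun h => irrefl e.1 (.head' he h)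
  have hstrict : StrictMono (toLinearExtension : I →o LinearExtension I) :=
    toLinearExtension.monotone.strictMono_of_injective fun _ _ h => h
  exact (monoEquivOfFin (LinearExtension I) rfl).symm.strictMono (hstrict hlt)

namespace Polynomial

theorem eq_of_eval_natCast_eq {R : Type*} [CommRing R] [IsDomain R] [CharZero R] {p q : R[X]}
    (h : ∀ n : ℕ, 0 < n → p.eval (n : R) = q.eval (n : R)) : p = q := by
  refine eq_of_infinite_eval_eq p q (Set.Infinite.mono ?_ ((Set.Ioi_infinite 0).image
    (Nat.cast_injective.injOn (s := Set.Ioi 0))))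
  rintro _ ⟨n, hn, rfl⟩
  exact h n hn

variable {K : Type*} [Field K]

noncomputable def shiftedChoose (k : ℕ) (a : K) : K[X] :=
  C (k ! : K)⁻¹ * (descPochhammer K k).comp (X + C a)

theorem eval_shiftedChoose (k : ℕ) (a x : K) :
    (shiftedChoose k a).eval x = (k ! : K)⁻¹ * (descPochhammer K k).eval (x + a) := by
  simp [shiftedChoose]

variable [CharZero K]

theorem eval_shiftedChoose_natCast (k m d : ℕ) :
    (shiftedChoose k (d : K)).eval (m : K) = (m + d).choose k := by
  rw [eval_shiftedChoose, ← Nat.cast_add, descPochhammer_eval_eq_descFactorial,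
    Nat.descFactorial_eq_factorial_mul_choose, Nat.cast_mul,
    inv_mul_cancel_left₀ (by exact_mod_cast k.factorial_ne_zero)]

theorem eval_shiftedChoose_neg_natCast {k d : ℕ} (hd : d ≤ k) (m : ℕ) :
    (shiftedChoose (k + 1) (d : K)).eval (-m : K) =
      (-1) ^ (k + 1) * (m + (k - d)).choose (k + 1) := by
  have harg : -(m : K) + d - (k + 1 : ℕ) + 1 = -((m + (k - d) : ℕ) : K) := by
    push_cast [Nat.cast_sub hd]; ring
  rw [eval_shiftedChoose, descPochhammer_eval_eq_ascPochhammer, harg,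
    ascPochhammer_eval_neg_eq_descPochhammer, descPochhammer_eval_eq_descFactorial,
    Nat.descFactorial_eq_factorial_mul_choose, Nat.cast_mul, mul_left_comm,
    inv_mul_cancel_left₀ (by exact_mod_cast (k + 1).factorial_ne_zero)]

end Polynomial

section LinearExtensions

variable {V α β : Type*}

def lexKey (f : V → α) (t : V → β) (v : V) : α ×ₗ β := toLex (f v, t v)

theorem lexKey_injective (f : V → α) {t : V → β} (ht : Injective t) :
    Injective (lexKey f t) :=
  fun _ _ h => ht (congrArg Prod.snd (toLex.injective h))

variable [LinearOrder β]

theorem lexKey_lt_lexKey_iff_le [LinearOrder α] {f : V → α} {t : V → β} {u v : V}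
    (h : t u < t v) : lexKey f t u < lexKey f t v ↔ f u ≤ f v := by
  simp [lexKey, Prod.Lex.toLex_lt_toLex, h, le_iff_lt_or_eq]

theorem lexKey_toDual_lt_lexKey_iff_lt [LinearOrder α] {f : V → α} {t : V → β} {u v : V}
    (h : t u < t v) :
    lexKey f (OrderDual.toDual ∘ t) u < lexKey f (OrderDual.toDual ∘ t) v ↔ f u < f v := by
  simp [lexKey, Prod.Lex.toLex_lt_toLex, h.not_gt]

theorem Equiv.eq_of_strictMono_comp {N : ℕ} {k : V → β} (hk : Injective k) {σ τ : Fin N ≃ V}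
    (hσ : StrictMono (k ∘ σ)) (hτ : StrictMono (k ∘ τ)) : σ = τ := by
  have hrange : Set.range (k ∘ σ) = Set.range (k ∘ τ) := by
    simp only [Set.range_comp, σ.range_eq_univ, τ.range_eq_univ]
  exact Equiv.ext fun i => hk (congrFun ((hσ.range_inj hτ).mp hrange) i)

theorem exists_equiv_strictMono_comp [Fintype V] {N : ℕ} (hN : Fintype.card V = N) {k : V → β}
    (hk : Injective k) : ∃ σ : Fin N ≃ V, StrictMono (k ∘ σ) := by
  let e := (Fintype.equivFinOfCardEq hN).symm
  exact ⟨(Tuple.sort (k ∘ e)).trans e,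
    (Tuple.monotone_sort (k ∘ e)).strictMono_of_injective
      (hk.comp ((Tuple.sort (k ∘ e)).trans e).injective)⟩

variable [Fintype V] [DecidableEq V] (E : Finset (V × V)) (N : ℕ)

def linearExtensions : Finset (Fin N ≃ V) :=
  univ.filter fun σ => ∀ e ∈ E, σ.symm e.1 < σ.symm e.2

theorem card_lexKey_lt_on_edges [LinearOrder α] [Finite α] {t : V → β} (ht : Injective t)
    (hN : Fintype.card V = N) :
    Nat.card {f : V → α // ∀ e ∈ E, lexKey f t e.1 < lexKey f t e.2} =
      ∑ σ ∈ linearExtensions E N, Nat.card {g : Fin N → α // StrictMono (lexKey g (t ∘ σ))} := by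
  rw [← Finset.sum_coe_sort, ← Nat.card_sigma]
  symm
  refine Nat.card_eq_of_bijective (fun p => ⟨p.2.1 ∘ p.1.1.symm, fun e he => ?_⟩) ⟨?_, ?_⟩
  · simpa [lexKey] using p.2.2 ((mem_filter.mp p.1.2).2 e he)
  · rintro ⟨⟨σ, hσ⟩, g, hg⟩ ⟨⟨τ, hτ⟩, g', hg'⟩ h
    have hgg' : g ∘ σ.symm = g' ∘ τ.symm := congrArg Subtype.val h
    have hgσ : g = (g ∘ σ.symm) ∘ σ := by ext; simp
    have hg'τ : g' = (g' ∘ τ.symm) ∘ τ := by ext; simp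
    obtain rfl : σ = τ := by
      rw [hgσ] at hg
      rw [hg'τ, ← hgg'] at hg'
      exact Equiv.eq_of_strictMono_comp (lexKey_injective _ ht) hg hg'
    obtain rfl : g = g' := by rw [hgσ, hg'τ, hgg']
    rfl
  · rintro ⟨f, hf⟩
    obtain ⟨σ, hσ⟩ := exists_equiv_strictMono_comp hN (lexKey_injective f ht)
    have hext : σ ∈ linearExtensions E N := mem_filter.mpr ⟨mem_univ σ, fun e he =>
      hσ.lt_iff_lt.mp (by simpa using hf e he)⟩
    exact ⟨⟨⟨σ, hext⟩, f ∘ σ, hσ⟩, Subtype.ext (by ext; simp)⟩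

end LinearExtensions

variable {M : ℕ}

section Descents

variable {β : Type*} [LinearOrder β]

def descents (c : Fin (M + 1) → β) : Finset (Fin M) :=
  univ.filter fun i => c i.succ < c i.castSucc

theorem descents_toDual_comp {c : Fin (M + 1) → β} (hc : Injective c) :
    descents (OrderDual.toDual ∘ c) = (descents c)ᶜ := by
  ext i
  have hne : c i.castSucc ≠ c i.succ := hc.ne Fin.castSucc_lt_succ.ne
  simp [descents, hne.le_iff_lt]

theorem strictMono_lexKey_iff {α : Type*} [LinearOrder α] {g : Fin (M + 1) → α}
    {c : Fin (M + 1) → β} (hc : Injective c) :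
    StrictMono (lexKey g c) ↔
      ∀ i, g i.castSucc ≤ g i.succ ∧ (i ∈ descents c → g i.castSucc < g i.succ) := by
  refine Fin.strictMono_iff_lt_succ.trans (forall_congr' fun i => ?_)
  have hne : c i.castSucc ≠ c i.succ := hc.ne Fin.castSucc_lt_succ.ne
  simp only [lexKey, Prod.Lex.toLex_lt_toLex', descents, mem_filter, mem_univ, true_and]
  grind

theorem card_descents_le (c : Fin (M + 1) → β) : #(descents c) ≤ M :=
  (card_le_univ _).trans_eq (Fintype.card_fin M)

end Descents

section GapWeight

variable (D : Finset (Fin M))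

def gapWeight (i : Fin (M + 1)) : ℕ := #(Dᶜ.filter (·.castSucc < i))

theorem gapWeight_zero : gapWeight D 0 = 0 := by
  simp [gapWeight]

theorem gapWeight_succ (i : Fin M) :
    gapWeight D i.succ = gapWeight D i.castSucc + if i ∈ D then 0 else 1 := by
  simp only [gapWeight, Fin.castSucc_lt_succ_iff, Fin.castSucc_lt_castSucc_iff, le_iff_lt_or_eq,
    filter_or, filter_eq', mem_compl]
  split_ifs with h
  · simp
  · rw [card_union_of_disjoint (disjoint_singleton_right.mpr (by simp))]
    simp

theorem gapWeight_last : gapWeight D (Fin.last M) = M - #D := by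
  simp [gapWeight, Fin.castSucc_lt_last, card_compl]

theorem gapWeight_mono : Monotone (gapWeight D) :=
  fun _ _ hij => card_le_card fun j => by
    simp only [mem_filter]
    exact fun ⟨hj, h⟩ => ⟨hj, h.trans_le hij⟩

variable {D} {K : ℕ} {h : Fin (M + 1) → Fin K}

theorem gapWeight_le_of_strictMono (hh : StrictMono h) (i : Fin (M + 1)) :
    gapWeight D i ≤ h i := by
  induction i using Fin.induction with
  | zero => simp [gapWeight_zero]
  | succ i ih =>
    have hstep := Fin.lt_def.mp (hh (Fin.castSucc_lt_succ (i := i)))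
    rw [gapWeight_succ]
    split_ifs <;> omega

theorem lt_add_gapWeight_of_strictMono {n : ℕ} (hh : StrictMono h) (hK : K = n + (M - #D))
    (i : Fin (M + 1)) : h i < n + gapWeight D i := by
  induction i using Fin.reverseInduction with
  | last => simpa [gapWeight_last, hK] using (h (Fin.last M)).isLt
  | cast i ih =>
    have hstep := Fin.lt_def.mp (hh (Fin.castSucc_lt_succ (i := i)))
    rw [gapWeight_succ] at ih
    split_ifs at ih <;> omega

end GapWeight

theorem card_strictMono_fin (k m : ℕ) :
    Nat.card {h : Fin k → Fin m // StrictMono h} = m.choose k := by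
  have e : {h : Fin k → Fin m // StrictMono h} ≃ {s : Finset (Fin m) // #s = k} :=
    { toFun h := ⟨univ.image h.1, by rw [card_image_of_injective _ h.2.injective, card_fin]⟩
      invFun s := ⟨s.1.orderEmbOfFin s.2, (s.1.orderEmbOfFin s.2).strictMono⟩
      left_inv h := Subtype.ext
        (orderEmbOfFin_unique _ (fun x => mem_image_of_mem _ (mem_univ x)) h.2).symm
      right_inv s := Subtype.ext (coe_injective (by simp)) }
  rw [Nat.card_congr e, Nat.card_eq_fintype_card, Fintype.card_finset_len, Fintype.card_fin]

theorem card_monotone_strictOn (n : ℕ) (D : Finset (Fin M)) :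
    Nat.card {g : Fin (M + 1) → Fin n //
        ∀ i, g i.castSucc ≤ g i.succ ∧ (i ∈ D → g i.castSucc < g i.succ)} =
      (n + (M - #D)).choose (M + 1) := by
  rw [← card_strictMono_fin]
  refine Nat.card_congr
    { toFun g := ⟨fun i => ⟨g.1 i + gapWeight D i, ?_⟩, ?_⟩
      invFun h := ⟨fun i => ⟨h.1 i - gapWeight D i, ?_⟩, fun i => ?_⟩
      left_inv g := ?_
      right_inv h := ?_ }
  · have := gapWeight_mono D (Fin.le_last i)
    rw [gapWeight_last] at this
    omega
  · refine Fin.strictMono_iff_lt_succ.mpr fun i => ?_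
    have hg := g.2 i
    by_cases hi : i ∈ D <;>
      simp only [hi, Fin.lt_def, Fin.le_def, gapWeight_succ, if_true, if_false, true_implies,
        false_implies] at hg ⊢ <;> omega
  · have := lt_add_gapWeight_of_strictMono h.2 rfl i
    have := gapWeight_le_of_strictMono (D := D) h.2 i
    omega
  · have hlt := h.2 (Fin.castSucc_lt_succ (i := i))
    have hle := gapWeight_le_of_strictMono (D := D) h.2 i.castSucc
    simp only [Fin.lt_def, Fin.le_def, gapWeight_succ] at hlt ⊢
    refine ⟨?_, fun _ => ?_⟩ <;> split_ifs <;> omega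
  · ext i
    simp
  · ext i
    have := gapWeight_le_of_strictMono (D := D) h.2 i
    simp only
    omega

theorem card_strictMono_lexKey {β : Type*} [LinearOrder β] (n : ℕ) {c : Fin (M + 1) → β}
    (hc : Injective c) :
    Nat.card {g : Fin (M + 1) → Fin n // StrictMono (lexKey g c)} =
      (n + (M - #(descents c))).choose (M + 1) := by
  simp_rw [strictMono_lexKey_iff hc]
  exact card_monotone_strictOn n _

section GraphColorings

variable {V β : Type*} [Fintype V] [DecidableEq V] [LinearOrder β] (E : Finset (V × V))
  {ι : V → β} (hι : Injective ι) (hE : ∀ e ∈ E, ι e.1 < ι e.2) (hV : Fintype.card V = M + 1)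
include hι hE hV

theorem card_weak_eq_sum (n : ℕ) :
    Nat.card {f : V → Fin n // ∀ e ∈ E, f e.1 ≤ f e.2} =
      ∑ σ ∈ linearExtensions E (M + 1), (n + (M - #(descents (ι ∘ σ)))).choose (M + 1) := by
  have hkey (f : V → Fin n) :
      (∀ e ∈ E, f e.1 ≤ f e.2) ↔ ∀ e ∈ E, lexKey f ι e.1 < lexKey f ι e.2 :=
    forall₂_congr fun e he => (lexKey_lt_lexKey_iff_le (hE e he)).symm
  rw [Nat.card_congr (Equiv.subtypeEquivRight hkey), card_lexKey_lt_on_edges E _ hι hV]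
  exact sum_congr rfl fun σ _ => card_strictMono_lexKey n (hι.comp σ.injective)

theorem card_strict_eq_sum (n : ℕ) :
    Nat.card {f : V → Fin n // ∀ e ∈ E, f e.1 < f e.2} =
      ∑ σ ∈ linearExtensions E (M + 1), (n + #(descents (ι ∘ σ))).choose (M + 1) := by
  have hkey (f : V → Fin n) : (∀ e ∈ E, f e.1 < f e.2) ↔
      ∀ e ∈ E, lexKey f (OrderDual.toDual ∘ ι) e.1 < lexKey f (OrderDual.toDual ∘ ι) e.2 :=
    forall₂_congr fun e he => (lexKey_toDual_lt_lexKey_iff_lt (hE e he)).symm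
  rw [Nat.card_congr (Equiv.subtypeEquivRight hkey),
    card_lexKey_lt_on_edges E _ (OrderDual.toDual.injective.comp hι) hV]
  refine sum_congr rfl fun σ _ => ?_
  have hισ : Injective (ι ∘ σ) := hι.comp σ.injective
  rw [Function.comp_assoc, card_strictMono_lexKey n (OrderDual.toDual.injective.comp hισ),
    descents_toDual_comp hισ, card_compl, Fintype.card_fin,
    Nat.sub_sub_self (card_descents_le _)]

end GraphColorings

theorem strict_weak_chromatic_reciprocity_general {I : Type*} [Fintype I]
    (E : Finset (I × I))
    (hacyc : ¬ ∃ (k : ℕ) (v : ℕ → I), 0 < k ∧ v 0 = v k ∧ ∀ m < k, (v m, v (m + 1)) ∈ E)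
    (P : Polynomial ℚ)
    (hP : ∀ n : ℕ, 0 < n →
      P.eval (n : ℚ) = Nat.card {f : I → Fin n // ∀ e ∈ E, f e.1 < f e.2}) :
    ∀ n : ℕ, 0 < n →
      (-1 : ℚ) ^ Fintype.card I * P.eval (-(n : ℚ)) =
        Nat.card {f : I → Fin n // ∀ e ∈ E, f e.1 ≤ f e.2} := by
  classical
  intro n _
  rcases hI : Fintype.card I with _ | M
  · have : IsEmpty I := Fintype.card_eq_zero_iff.mp hI
    have hP1 : P = 1 := eq_of_eval_natCast_eq fun m hm => by
      simp [hP m hm, E.eq_empty_of_isEmpty]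
    simp [hP1, E.eq_empty_of_isEmpty]
  obtain ⟨ι, hι⟩ := exists_equiv_fin_lt_of_acyclic E hacyc
  have hPsum : P = ∑ σ ∈ linearExtensions E (M + 1),
      shiftedChoose (M + 1) (#(descents (ι ∘ σ)) : ℚ) := eq_of_eval_natCast_eq fun m hm => by
    rw [hP m hm, card_strict_eq_sum E ι.injective hι hI, eval_finsetSum]
    simp only [Nat.cast_sum, eval_shiftedChoose_natCast]
  rw [hPsum, eval_finsetSum, mul_sum, card_weak_eq_sum E ι.injective hι hI]
  push_cast
  refine sum_congr rfl fun σ _ => ?_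
  rw [eval_shiftedChoose_neg_natCast (card_descents_le _), ← mul_assoc, ← pow_add,
    Even.neg_one_pow ⟨_, rfl⟩, one_mul]

theorem strict_weak_chromatic_reciprocity {I : Type*} [Fintype I]
    (E : Finset (I × I)) (hE : ∀ e ∈ E, e.1 ≠ e.2)
    (hacyc : ¬ ∃ (k : ℕ) (v : ℕ → I), 0 < k ∧ v 0 = v k ∧ ∀ m < k, (v m, v (m + 1)) ∈ E)
    (P : Polynomial ℚ)
    (hP : ∀ n : ℕ, 0 < n →
      P.eval (n : ℚ) = Nat.card {f : I → Fin n // ∀ e ∈ E, f e.1 < f e.2}) :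
    ∀ n : ℕ, 0 < n →
      (-1 : ℚ) ^ Fintype.card I * P.eval (-(n : ℚ)) =
        Nat.card {f : I → Fin n // ∀ e ∈ E, f e.1 ≤ f e.2} :=
  strict_weak_chromatic_reciprocity_general E hacyc P hP
end

section
/- Let g = (I,E) be a directed graph with a designated source α and sink ω and capacity function c : E → ℝ_{≥0}. Then the maximum value of a flow from α to ω equals the minimum capacity of a cut: max_{f flow} [f] = min_{I = S ⊔ T, α∈S, ω∈T} ∑_{(i,j)∈E, i∈S, j∈T} c(i,j). -/
set_option linter.unusedSectionVars false
open Finset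
section MFMC
variable {I : Type*} [Fintype I] [DecidableEq I]

def mfmcNet (E : Finset (I × I)) (g : I × I → ℝ) (v : I) : ℝ :=
  (∑ e ∈ E.filter (fun e => e.2 = v), g e) - (∑ e ∈ E.filter (fun e => e.1 = v), g e)

theorem mfmcNet_comb (E : Finset (I × I)) (a b : ℝ) (f g : I × I → ℝ) (v : I) :
    mfmcNet E (fun x => a * f x + b * g x) v = a * mfmcNet E f v + b * mfmcNet E g v := by
  simp only [mfmcNet, Finset.sum_add_distrib, ← Finset.mul_sum]
  ring

theorem mfmcNet_add (E : Finset (I × I)) (f g : I × I → ℝ) (v : I) :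
    mfmcNet E (fun x => f x + g x) v = mfmcNet E f v + mfmcNet E g v := by
  simp only [mfmcNet, Finset.sum_add_distrib]; ring

theorem mfmcNet_single (E : Finset (I × I)) (e : I × I) (he : e ∈ E) (d : ℝ) (v : I) :
    mfmcNet E (fun x => if x = e then d else 0) v
      = (if e.2 = v then d else 0) - (if e.1 = v then d else 0) := by
  simp [mfmcNet, Finset.sum_ite_eq', Finset.mem_filter, he]

theorem mfmcSum_net (E : Finset (I × I)) (g : I × I → ℝ) (S : Finset I) :
    ∑ v ∈ S, mfmcNet E g v
      = (∑ e ∈ E.filter (fun e => e.1 ∉ S ∧ e.2 ∈ S), g e)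
        - ∑ e ∈ E.filter (fun e => e.1 ∈ S ∧ e.2 ∉ S), g e := by
  classical
  have h1 : ∀ p : I × I → I, (∑ v ∈ S, ∑ e ∈ E.filter (fun e => p e = v), g e)
      = ∑ e ∈ E, if p e ∈ S then g e else 0 := by
    intro p
    simp_rw [Finset.sum_filter]
    rw [Finset.sum_comm]
    refine Finset.sum_congr rfl fun e _ => ?_
    exact Finset.sum_ite_eq S (p e) (fun _ => g e)
  simp only [mfmcNet, Finset.sum_sub_distrib]
  rw [h1 (fun e => e.2), h1 (fun e => e.1), Finset.sum_filter, Finset.sum_filter,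
    ← Finset.sum_sub_distrib, ← Finset.sum_sub_distrib]
  refine Finset.sum_congr rfl fun e _ => ?_
  by_cases h1 : e.1 ∈ S <;> by_cases h2 : e.2 ∈ S <;> simp [h1, h2]
end MFMC

section MFMC2
variable {I : Type*} [Fintype I] [DecidableEq I]

theorem mfmc_value_cut (E : Finset (I × I)) (α ω : I)
    (hsource : ∀ e ∈ E, e.2 ≠ α) (f : I × I → ℝ)
    (hcons : ∀ v, v ≠ α → v ≠ ω → mfmcNet E f v = 0)
    (S : Finset I) (hαS : α ∈ S) (hωS : ω ∉ S) :
    (∑ e ∈ E.filter (fun e => e.1 = α), f e)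
      = (∑ e ∈ E.filter (fun e => e.1 ∈ S ∧ e.2 ∉ S), f e)
        - ∑ e ∈ E.filter (fun e => e.1 ∉ S ∧ e.2 ∈ S), f e := by
  have h0 : ∑ v ∈ S, mfmcNet E f v = mfmcNet E f α := by
    rw [← Finset.add_sum_erase S _ hαS, Finset.sum_eq_zero, add_zero]
    intro v hv
    exact hcons v (Finset.ne_of_mem_erase hv)
      (fun h => hωS (h ▸ Finset.mem_of_mem_erase hv))
  have hin : E.filter (fun e => e.2 = α) = ∅ := by
    refine Finset.filter_eq_empty_iff.2 fun e he => hsource e he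
  have h1 : mfmcNet E f α = - ∑ e ∈ E.filter (fun e => e.1 = α), f e := by
    rw [mfmcNet, hin]; simp
  have h2 := mfmcSum_net E f S
  rw [h0, h1] at h2
  linarith
end MFMC2

section MFMC3
variable {I : Type*} [Fintype I] [DecidableEq I]

theorem mfmc_exists_max (E : Finset (I × I)) (α ω : I) (c : I × I → ℝ)
    (hc : ∀ e ∈ E, 0 ≤ c e) :
    ∃ f₀ : I × I → ℝ,
      ((∀ e ∈ E, 0 ≤ f₀ e ∧ f₀ e ≤ c e) ∧
        ∀ v : I, v ≠ α → v ≠ ω →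
          (∑ e ∈ E.filter (fun e => e.2 = v), f₀ e) = ∑ e ∈ E.filter (fun e => e.1 = v), f₀ e) ∧
      ∀ f : I × I → ℝ,
        ((∀ e ∈ E, 0 ≤ f e ∧ f e ≤ c e) ∧
          ∀ v : I, v ≠ α → v ≠ ω →
            (∑ e ∈ E.filter (fun e => e.2 = v), f e) = ∑ e ∈ E.filter (fun e => e.1 = v), f e) →
        (∑ e ∈ E.filter (fun e => e.1 = α), f e) ≤ ∑ e ∈ E.filter (fun e => e.1 = α), f₀ e := by
  classical
  set K : Set (I × I → ℝ) := {f | (∀ e ∈ E, 0 ≤ f e ∧ f e ≤ c e) ∧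
    (∀ v : I, v ≠ α → v ≠ ω →
      (∑ e ∈ E.filter (fun e => e.2 = v), f e) = ∑ e ∈ E.filter (fun e => e.1 = v), f e) ∧
    ∀ e ∉ E, f e = 0} with hKdef
  have hKeq : K = ({f : I × I → ℝ | ∀ e ∈ E, 0 ≤ f e ∧ f e ≤ c e} ∩
      {f : I × I → ℝ | ∀ v : I, v ≠ α → v ≠ ω →
        (∑ e ∈ E.filter (fun e => e.2 = v), f e) = ∑ e ∈ E.filter (fun e => e.1 = v), f e}) ∩
      {f : I × I → ℝ | ∀ e ∉ E, f e = 0} := by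
    ext f; simp [hKdef, and_assoc]
  have hclosed : IsClosed K := by
    rw [hKeq]
    refine IsClosed.inter (IsClosed.inter ?_ ?_) ?_
    · have : {f : I × I → ℝ | ∀ e ∈ E, 0 ≤ f e ∧ f e ≤ c e}
          = ⋂ e ∈ E, ({f : I × I → ℝ | 0 ≤ f e} ∩ {f | f e ≤ c e}) := by
        ext f; simp [Set.mem_iInter]
      rw [this]
      exact isClosed_biInter fun e _ =>
        (isClosed_le continuous_const (continuous_apply e)).inter
          (isClosed_le (continuous_apply e) continuous_const)
    · have : {f : I × I → ℝ | ∀ v : I, v ≠ α → v ≠ ω →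
          (∑ e ∈ E.filter (fun e => e.2 = v), f e) = ∑ e ∈ E.filter (fun e => e.1 = v), f e}
          = ⋂ (v : I) (_ : v ≠ α) (_ : v ≠ ω),
            {f : I × I → ℝ | (∑ e ∈ E.filter (fun e => e.2 = v), f e)
              = ∑ e ∈ E.filter (fun e => e.1 = v), f e} := by
        ext f; simp [Set.mem_iInter]
      rw [this]
      exact isClosed_iInter fun v => isClosed_iInter fun _ => isClosed_iInter fun _ =>
        isClosed_eq (continuous_finset_sum _ fun e _ => continuous_apply e)
          (continuous_finset_sum _ fun e _ => continuous_apply e)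
    · have : {f : I × I → ℝ | ∀ e ∉ E, f e = 0}
          = ⋂ (e : I × I) (_ : e ∉ E), {f : I × I → ℝ | f e = 0} := by
        ext f; simp [Set.mem_iInter]
      rw [this]
      exact isClosed_iInter fun e => isClosed_iInter fun _ =>
        isClosed_eq (continuous_apply e) continuous_const
  have hbox : IsCompact (Set.pi Set.univ fun e : I × I => Set.Icc (0:ℝ) (max (c e) 0)) :=
    isCompact_univ_pi fun e => isCompact_Icc
  have hsub : K ⊆ Set.pi Set.univ fun e : I × I => Set.Icc (0:ℝ) (max (c e) 0) := by
    intro f hf e _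
    by_cases he : e ∈ E
    · exact ⟨(hf.1 e he).1, le_trans (hf.1 e he).2 (le_max_left _ _)⟩
    · rw [hf.2.2 e he]; exact ⟨le_refl _, le_max_right _ _⟩
  have hcomp : IsCompact K := hbox.of_isClosed_subset hclosed hsub
  have h0K : (0 : I × I → ℝ) ∈ K := by
    refine ⟨fun e he => ⟨le_refl _, hc e he⟩, fun v _ _ => by simp, fun e _ => rfl⟩
  obtain ⟨f₀, hf₀K, hmax⟩ := hcomp.exists_isMaxOn ⟨0, h0K⟩
    ((continuous_finset_sum _ fun e _ => continuous_apply e :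
      Continuous fun f : I × I → ℝ => ∑ e ∈ E.filter (fun e => e.1 = α), f e).continuousOn)
  refine ⟨f₀, ⟨hf₀K.1, hf₀K.2.1⟩, fun f hf => ?_⟩
  set f' : I × I → ℝ := fun e => if e ∈ E then f e else 0 with hf'def
  have hmem : ∀ s : Finset (I × I), s ⊆ E → ∑ e ∈ s, f' e = ∑ e ∈ s, f e :=
    fun s hs => Finset.sum_congr rfl fun e he => if_pos (hs he)
  have hf'K : f' ∈ K := by
    refine ⟨fun e he => by simpa [hf'def, he] using hf.1 e he, fun v hv hw => ?_,
      fun e he => if_neg he⟩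
    rw [hmem _ (Finset.filter_subset _ _), hmem _ (Finset.filter_subset _ _)]
    exact hf.2 v hv hw
  calc (∑ e ∈ E.filter (fun e => e.1 = α), f e)
      = ∑ e ∈ E.filter (fun e => e.1 = α), f' e := (hmem _ (Finset.filter_subset _ _)).symm
    _ ≤ ∑ e ∈ E.filter (fun e => e.1 = α), f₀ e := hmax hf'K
end MFMC3

section MFMC4
variable {I : Type*} [Fintype I] [DecidableEq I]


theorem mfmcNet_combo (E : Finset (I × I)) (e : I × I) (he : e ∈ E) (a b d : ℝ)
    (f g : I × I → ℝ) (v : I) :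
    mfmcNet E (fun x => a * f x + b * g x + (if x = e then d else 0)) v
      = a * mfmcNet E f v + b * mfmcNet E g v
        + ((if e.2 = v then d else 0) - (if e.1 = v then d else 0)) := by
  simp only [mfmcNet, Finset.sum_add_distrib, ← Finset.mul_sum,
    Finset.sum_ite_eq', Finset.mem_filter, he, true_and]
  ring

set_option maxHeartbeats 1600000 in
theorem mfmc_augment (E : Finset (I × I)) (hE : ∀ e ∈ E, e.1 ≠ e.2) (α : I)
    (hsource : ∀ e ∈ E, e.2 ≠ α) (c f₀ : I × I → ℝ)
    (hf₀ : ∀ e ∈ E, 0 ≤ f₀ e ∧ f₀ e ≤ c e) (v : I)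
    (hreach : Relation.ReflTransGen
      (fun u w => ((u, w) ∈ E ∧ f₀ (u, w) < c (u, w)) ∨ ((w, u) ∈ E ∧ 0 < f₀ (w, u))) α v) :
    ∃ (g : I × I → ℝ) (δ : ℝ), 0 ≤ δ ∧ (v ≠ α → 0 < δ) ∧
      (∀ e ∈ E, 0 ≤ g e ∧ g e ≤ c e) ∧
      (∀ u, u ≠ α → u ≠ v → mfmcNet E g u = mfmcNet E f₀ u) ∧
      mfmcNet E g v = mfmcNet E f₀ v + δ ∧
      mfmcNet E g α = mfmcNet E f₀ α - δ := by
  induction hreach with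
  | refl =>
    exact ⟨f₀, 0, le_refl _, fun h => absurd rfl h, hf₀, fun u _ _ => rfl,
      by ring, by ring⟩
  | @tail b cv hab hbc ih =>
    by_cases hcα : cv = α
    · subst hcα
      exact ⟨f₀, 0, le_refl _, fun h => absurd rfl h, hf₀, fun u _ _ => rfl,
        by ring, by ring⟩
    obtain ⟨g, δ, hδnn, hδpos, hgb, hgnet, hgv, hgα⟩ := ih
    rcases hbc with ⟨heE, hlt⟩ | ⟨heE, hpos⟩
    · -- forward edge e = (b, cv) with slack
      set e : I × I := (b, cv) with hedef
      have he1 : e.1 = b := rfl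
      have he2 : e.2 = cv := rfl
      have hbc' : b ≠ cv := hE e heE
      set s : ℝ := c e - f₀ e with hsdef
      have hs : 0 < s := by rw [hsdef]; linarith
      set D : ℝ := |g e - f₀ e| with hDdef
      have hDnn : 0 ≤ D := abs_nonneg _
      have hden : (0:ℝ) < 4 * (δ + D + 1) := by positivity
      set q : ℝ := s / (4 * (δ + D + 1)) with hqdef
      have hq0 : 0 < q := div_pos hs hden
      have hkey : q * (4 * (δ + D + 1)) = s := div_mul_cancel₀ _ hden.ne'
      set t : ℝ := min 1 q with htdef
      have ht0 : 0 < t := lt_min one_pos hq0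
      have ht1 : t ≤ 1 := min_le_left _ _
      have htq : t ≤ q := min_le_right _ _
      have htD : t * D ≤ s / 4 := by nlinarith [mul_le_mul_of_nonneg_right htq hDnn]
      have htδ : t * δ ≤ s / 4 := by nlinarith [mul_le_mul_of_nonneg_right htq hδnn]
      have hδ0 : b = α → δ = 0 := by
        intro hbα
        have h1 : mfmcNet E g α = mfmcNet E f₀ α + δ := hbα ▸ hgv
        linarith [hgα, h1]
      set η : ℝ := if b = α then s / 2 else 0 with hηdef
      have hη0 : 0 ≤ η := by rw [hηdef]; split <;> linarith
      have hη2 : η ≤ s / 2 := by rw [hηdef]; split <;> linarith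
      set ρ : ℝ := t * δ + η with hρdef
      have hρ0 : 0 ≤ ρ := by positivity
      refine ⟨fun x => (1 - t) * f₀ x + t * g x + (if x = e then ρ else 0), ρ, hρ0,
        fun _ => ?_, ?_, ?_, ?_, ?_⟩
      · by_cases hbα : b = α
        · have hη : η = s / 2 := by rw [hηdef, if_pos hbα]
          nlinarith [mul_nonneg ht0.le hδnn]
        · have hδp : 0 < δ := hδpos hbα
          have hη : η = 0 := by rw [hηdef, if_neg hbα]
          nlinarith
      · intro x hx
        dsimp only
        have h1 := (hf₀ x hx).1
        have h2 := (hf₀ x hx).2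
        have h3 := (hgb x hx).1
        have h4 := (hgb x hx).2
        have h1t : (0:ℝ) ≤ 1 - t := by linarith
        have p1 : 0 ≤ (1 - t) * f₀ x := mul_nonneg h1t h1
        have p2 : 0 ≤ t * g x := mul_nonneg ht0.le h3
        have p3 : (1 - t) * f₀ x ≤ (1 - t) * c x := mul_le_mul_of_nonneg_left h2 h1t
        have p4 : t * g x ≤ t * c x := mul_le_mul_of_nonneg_left h4 ht0.le
        by_cases hxe : x = e
        · rw [if_pos hxe]
          constructor
          · linarith
          · have habs : g e - f₀ e ≤ D := le_abs_self _
            have h5 : t * (g e - f₀ e) ≤ t * D := mul_le_mul_of_nonneg_left habs ht0.le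
            have hce : c e = f₀ e + s := by rw [hsdef]; ring
            rw [hxe] at h1 h2 h3 h4 p1 p2 p3 p4 ⊢
            linarith
        · rw [if_neg hxe]
          constructor <;> linarith
      · intro u huα hucv
        rw [mfmcNet_combo E e heE _ _ _ _ _ u, he1, he2]
        by_cases hub : u = b
        · have hη : η = 0 := by rw [hηdef, if_neg (fun h => huα (hub.trans h))]
          rw [hub, hgv, if_neg (fun h => hbc' h.symm), if_pos rfl, hρdef, hη]
          ring
        · rw [hgnet u huα hub, if_neg (fun h => hucv h.symm), if_neg (fun h => hub h.symm)]
          ring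
      · rw [mfmcNet_combo E e heE _ _ _ _ _ cv, he1, he2,
          hgnet cv hcα (fun h => hbc' h.symm), if_pos rfl, if_neg hbc']
        ring
      · rw [mfmcNet_combo E e heE _ _ _ _ _ α, he1, he2, hgα,
          if_neg (fun h => hcα h)]
        by_cases hbα : b = α
        · have hδz : δ = 0 := hδ0 hbα
          rw [if_pos hbα, hδz, hρdef]
          have hη : η = s / 2 := by rw [hηdef, if_pos hbα]
          ring
        · rw [if_neg hbα]
          have hη : η = 0 := by rw [hηdef, if_neg hbα]
          rw [hρdef, hη]; ring
    · -- backward edge e = (cv, b) with positive flow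
      set e : I × I := (cv, b) with hedef
      have he1 : e.1 = cv := rfl
      have he2 : e.2 = b := rfl
      have hbα : b ≠ α := hsource e heE
      have hbc' : cv ≠ b := hE e heE
      have hδp : 0 < δ := hδpos hbα
      set s : ℝ := f₀ e with hsdef
      have hs : 0 < s := hpos
      set D : ℝ := |g e - f₀ e| with hDdef
      have hDnn : 0 ≤ D := abs_nonneg _
      have hden : (0:ℝ) < 4 * (δ + D + 1) := by positivity
      set q : ℝ := s / (4 * (δ + D + 1)) with hqdef
      have hq0 : 0 < q := div_pos hs hden
      have hkey : q * (4 * (δ + D + 1)) = s := div_mul_cancel₀ _ hden.ne'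
      set t : ℝ := min 1 q with htdef
      have ht0 : 0 < t := lt_min one_pos hq0
      have ht1 : t ≤ 1 := min_le_left _ _
      have htq : t ≤ q := min_le_right _ _
      have htD : t * D ≤ s / 4 := by nlinarith [mul_le_mul_of_nonneg_right htq hDnn]
      have htδ : t * δ ≤ s / 4 := by nlinarith [mul_le_mul_of_nonneg_right htq hδnn]
      set ρ : ℝ := t * δ with hρdef
      have hρ0 : 0 < ρ := by positivity
      refine ⟨fun x => (1 - t) * f₀ x + t * g x + (if x = e then -ρ else 0), ρ, hρ0.le,
        fun _ => hρ0, ?_, ?_, ?_, ?_⟩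
      · intro x hx
        dsimp only
        have h1 := (hf₀ x hx).1
        have h2 := (hf₀ x hx).2
        have h3 := (hgb x hx).1
        have h4 := (hgb x hx).2
        have h1t : (0:ℝ) ≤ 1 - t := by linarith
        have p1 : 0 ≤ (1 - t) * f₀ x := mul_nonneg h1t h1
        have p2 : 0 ≤ t * g x := mul_nonneg ht0.le h3
        have p3 : (1 - t) * f₀ x ≤ (1 - t) * c x := mul_le_mul_of_nonneg_left h2 h1t
        have p4 : t * g x ≤ t * c x := mul_le_mul_of_nonneg_left h4 ht0.le
        by_cases hxe : x = e
        · rw [if_pos hxe]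
          constructor
          · have habs : -D ≤ g e - f₀ e := neg_abs_le _
            have h5 : t * (-D) ≤ t * (g e - f₀ e) := mul_le_mul_of_nonneg_left habs ht0.le
            have hse : s = f₀ e := hsdef
            rw [hxe] at h1 h2 h3 h4 p1 p2 p3 p4 ⊢
            linarith
          · rw [hxe] at h1 h2 h3 h4 p1 p2 p3 p4 ⊢
            linarith
        · rw [if_neg hxe]
          constructor <;> linarith
      · intro u huα hucv
        rw [mfmcNet_combo E e heE _ _ _ _ _ u, he1, he2]
        by_cases hub : u = b
        · rw [hub, hgv, if_pos rfl, if_neg hbc', hρdef]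
          ring
        · rw [hgnet u huα hub, if_neg (fun h => hub h.symm), if_neg (fun h => hucv h.symm)]
          ring
      · rw [mfmcNet_combo E e heE _ _ _ _ _ cv, he1, he2,
          hgnet cv hcα (fun h => hbc' h), if_neg (fun h => hbc' h.symm), if_pos rfl]
        ring
      · rw [mfmcNet_combo E e heE _ _ _ _ _ α, he1, he2, hgα,
          if_neg (fun h => hbα h), if_neg (fun h => hcα h)]
        ring
end MFMC4




open Classical in
theorem max_flow_min_cut {I : Type*} [Fintype I] [DecidableEq I]
    (E : Finset (I × I)) (hE : ∀ e ∈ E, e.1 ≠ e.2)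
    (α ω : I) (hαω : α ≠ ω)
    (hsource : ∀ e ∈ E, e.2 ≠ α) (hsink : ∀ e ∈ E, e.1 ≠ ω)
    (c : I × I → ℝ) (hc : ∀ e ∈ E, 0 ≤ c e) :
    -- a flow is `f` with `IsFlow f`; its value is the total flow out of the source
    letI IsFlow : (I × I → ℝ) → Prop := fun f =>
      (∀ e ∈ E, 0 ≤ f e ∧ f e ≤ c e) ∧
      ∀ v : I, v ≠ α → v ≠ ω →
        (∑ e ∈ E.filter (fun e => e.2 = v), f e) = ∑ e ∈ E.filter (fun e => e.1 = v), f e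
    letI value : (I × I → ℝ) → ℝ := fun f => ∑ e ∈ E.filter (fun e => e.1 = α), f e
    letI capacity : Finset I → ℝ := fun S => ∑ e ∈ E.filter (fun e => e.1 ∈ S ∧ e.2 ∉ S), c e
    ∃ f₀ S₀, IsFlow f₀ ∧ α ∈ S₀ ∧ ω ∉ S₀ ∧ value f₀ = capacity S₀ ∧
      (∀ f, IsFlow f → value f ≤ value f₀) ∧
      (∀ S : Finset I, α ∈ S → ω ∉ S → capacity S₀ ≤ capacity S) := by
  classical
  obtain ⟨f₀, hflow₀, hmax⟩ := mfmc_exists_max E α ω c hc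
  have hnet₀ : ∀ v, v ≠ α → v ≠ ω → mfmcNet E f₀ v = 0 := fun v h1 h2 =>
    sub_eq_zero.2 (hflow₀.2 v h1 h2)
  set R : I → I → Prop := fun u w =>
    ((u, w) ∈ E ∧ f₀ (u, w) < c (u, w)) ∨ ((w, u) ∈ E ∧ 0 < f₀ (w, u)) with hRdef
  set S₀ : Finset I := Finset.univ.filter (fun v => Relation.ReflTransGen R α v) with hS₀def
  have hαS : α ∈ S₀ := Finset.mem_filter.2 ⟨Finset.mem_univ _, Relation.ReflTransGen.refl⟩
  have hinempty : E.filter (fun e => e.2 = α) = ∅ :=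
    Finset.filter_eq_empty_iff.2 (fun e he => hsource e he)
  have hvα : ∀ h : I × I → ℝ,
      mfmcNet E h α = - ∑ e ∈ E.filter (fun e => e.1 = α), h e := by
    intro h; rw [mfmcNet, hinempty]; simp
  have hωS : ω ∉ S₀ := by
    intro hmem
    have hreach := (Finset.mem_filter.1 hmem).2
    obtain ⟨g, δ, hδnn, hδpos, hgb, hgnet, hgω, hgα⟩ :=
      mfmc_augment E hE α hsource c f₀ hflow₀.1 ω hreach
    have hδp : 0 < δ := hδpos (fun h => hαω h.symm)
    have hgflow : (∀ e ∈ E, 0 ≤ g e ∧ g e ≤ c e) ∧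
        ∀ v : I, v ≠ α → v ≠ ω →
          (∑ e ∈ E.filter (fun e => e.2 = v), g e)
            = ∑ e ∈ E.filter (fun e => e.1 = v), g e :=
      ⟨hgb, fun v h1 h2 => sub_eq_zero.1 (by
        have hz : mfmcNet E g v = 0 := by rw [hgnet v h1 h2]; exact hnet₀ v h1 h2
        exact hz)⟩
    have hle := hmax g hgflow
    rw [hvα g, hvα f₀] at hgα
    linarith
  have hsat : ∀ e ∈ E, e.1 ∈ S₀ → e.2 ∉ S₀ → f₀ e = c e := by
    intro e he h1 h2
    by_contra hne
    have hlt : f₀ e < c e := lt_of_le_of_ne (hflow₀.1 e he).2 hne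
    exact h2 (Finset.mem_filter.2 ⟨Finset.mem_univ _,
      ((Finset.mem_filter.1 h1).2).tail (Or.inl ⟨by rwa [Prod.mk.eta], by rwa [Prod.mk.eta]⟩)⟩)
  have hzero : ∀ e ∈ E, e.1 ∉ S₀ → e.2 ∈ S₀ → f₀ e = 0 := by
    intro e he h1 h2
    by_contra hne
    have hpos : 0 < f₀ e := lt_of_le_of_ne (hflow₀.1 e he).1 (Ne.symm hne)
    exact h1 (Finset.mem_filter.2 ⟨Finset.mem_univ _,
      ((Finset.mem_filter.1 h2).2).tail (Or.inr ⟨by rwa [Prod.mk.eta], by rwa [Prod.mk.eta]⟩)⟩)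
  have hweak : ∀ f : I × I → ℝ,
      ((∀ e ∈ E, 0 ≤ f e ∧ f e ≤ c e) ∧
        ∀ v : I, v ≠ α → v ≠ ω →
          (∑ e ∈ E.filter (fun e => e.2 = v), f e)
            = ∑ e ∈ E.filter (fun e => e.1 = v), f e) →
      ∀ S : Finset I, α ∈ S → ω ∉ S →
        (∑ e ∈ E.filter (fun e => e.1 = α), f e)
          ≤ ∑ e ∈ E.filter (fun e => e.1 ∈ S ∧ e.2 ∉ S), c e := by
    intro f hf S hα hω
    have hnet : ∀ v, v ≠ α → v ≠ ω → mfmcNet E f v = 0 := fun v h1 h2 =>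
      sub_eq_zero.2 (hf.2 v h1 h2)
    rw [mfmc_value_cut E α ω hsource f hnet S hα hω]
    have hle : (∑ e ∈ E.filter (fun e => e.1 ∈ S ∧ e.2 ∉ S), f e)
        ≤ ∑ e ∈ E.filter (fun e => e.1 ∈ S ∧ e.2 ∉ S), c e :=
      Finset.sum_le_sum fun e he => (hf.1 e (Finset.mem_filter.1 he).1).2
    have hge : (0:ℝ) ≤ ∑ e ∈ E.filter (fun e => e.1 ∉ S ∧ e.2 ∈ S), f e :=
      Finset.sum_nonneg fun e he => (hf.1 e (Finset.mem_filter.1 he).1).1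
    linarith
  have hval : (∑ e ∈ E.filter (fun e => e.1 = α), f₀ e)
      = ∑ e ∈ E.filter (fun e => e.1 ∈ S₀ ∧ e.2 ∉ S₀), c e := by
    rw [mfmc_value_cut E α ω hsource f₀ hnet₀ S₀ hαS hωS]
    have h1 : (∑ e ∈ E.filter (fun e => e.1 ∈ S₀ ∧ e.2 ∉ S₀), f₀ e)
        = ∑ e ∈ E.filter (fun e => e.1 ∈ S₀ ∧ e.2 ∉ S₀), c e :=
      Finset.sum_congr rfl fun e he => hsat e (Finset.mem_filter.1 he).1
        (Finset.mem_filter.1 he).2.1 (Finset.mem_filter.1 he).2.2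
    have h2 : (∑ e ∈ E.filter (fun e => e.1 ∉ S₀ ∧ e.2 ∈ S₀), f₀ e) = 0 :=
      Finset.sum_eq_zero fun e he => hzero e (Finset.mem_filter.1 he).1
        (Finset.mem_filter.1 he).2.1 (Finset.mem_filter.1 he).2.2
    rw [h1, h2]; ring
  refine ⟨f₀, S₀, hflow₀, hαS, hωS, hval, hmax, fun S hα hω => ?_⟩
  dsimp only
  rw [← hval]
  exact hweak f₀ hflow₀ S hα hω
end

section
/- Let g = (I,E) be a directed graph and y : I → [n] a function. The cone C(g) = Cone{e_i − e_j : (j,i) ∈ E} has y-maximal face equal to the single point {0} if and only if y(j) > y(i) for every edge (j,i) ∈ E. Consequently the number of functions y : I → [n] for which the y-maximum face of C(g) is a point equals π_g^>(n), the number of strictly order-preserving n-colorings of g. -/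
/-- The `y`-maximal face of the cone of `g`. -/
def maxFace {I : Type*} [Fintype I] [DecidableEq I] (E : Finset (I × I)) (y : I → ℝ) :
    Set (I → ℝ) :=
  {x ∈ dgCone E | ∀ x' ∈ dgCone E, (∑ i, x' i * y i) ≤ ∑ i, x i * y i}

lemma dgCone_val {I : Type*} [Fintype I] [DecidableEq I] (E : Finset (I × I))
    (lam : I × I → ℝ) (y : I → ℝ) :
    ∑ i, ((∑ e ∈ E, lam e • (Pi.single e.2 (1 : ℝ) - Pi.single e.1 (1 : ℝ))) : I → ℝ) i * y i
      = ∑ e ∈ E, lam e * (y e.2 - y e.1) := by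
  simp only [Finset.sum_apply, Pi.smul_apply, Pi.sub_apply, smul_eq_mul,
    Finset.sum_mul]
  rw [Finset.sum_comm]
  refine Finset.sum_congr rfl fun e _ => ?_
  simp [Pi.single_apply, sub_mul, Finset.mul_sum, mul_sub]

lemma zero_mem_dgCone {I : Type*} [Fintype I] [DecidableEq I] (E : Finset (I × I)) :
    (0 : I → ℝ) ∈ dgCone E :=
  ⟨0, fun _ => le_refl 0, by simp⟩

theorem dgCone_generic_count {I : Type*} [Fintype I] [DecidableEq I]
    (E : Finset (I × I)) (hE : ∀ e ∈ E, e.1 ≠ e.2) (n : ℕ) :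
    (∀ y : I → Fin n,
      (maxFace E (fun i => ((y i : ℕ) : ℝ)) = {0} ↔ ∀ e ∈ E, y e.2 < y e.1)) ∧
    Nat.card {y : I → Fin n // maxFace E (fun i => ((y i : ℕ) : ℝ)) = {0}} =
      Nat.card {f : I → Fin n // ∀ e ∈ E, f e.1 < f e.2} := by
  have key : ∀ y : I → Fin n,
      (maxFace E (fun i => ((y i : ℕ) : ℝ)) = {0} ↔ ∀ e ∈ E, y e.2 < y e.1) := by
    intro y
    set Y : I → ℝ := fun i => ((y i : ℕ) : ℝ) with hY
    constructor
    · intro h e he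
      by_contra hlt
      -- then Y e.1 ≤ Y e.2
      have hle : Y e.1 ≤ Y e.2 := by
        simp only [hY, Nat.cast_le]
        exact_mod_cast not_lt.mp hlt
      -- the generator vector of e
      set v : I → ℝ := Pi.single e.2 (1 : ℝ) - Pi.single e.1 (1 : ℝ) with hv
      have hvmem : v ∈ dgCone E := by
        refine ⟨fun e' => if e' = e then 1 else 0, fun e' => by positivity, ?_⟩
        rw [Finset.sum_eq_single e]
        · simp [hv]
        · intro b _ hb; simp [hb]
        · intro hne; exact absurd he hne
      have h0 : (0 : I → ℝ) ∈ maxFace E Y := by rw [h]; rfl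
      have hub : ∀ x' ∈ dgCone E, (∑ i, x' i * Y i) ≤ 0 := by
        intro x' hx'
        have := h0.2 x' hx'
        simpa using this
      have hvval : ∑ i, v i * Y i = Y e.2 - Y e.1 := by
        have := dgCone_val {e} (fun _ => (1:ℝ)) Y
        simpa [hv] using this
      have hvval0 : ∑ i, v i * Y i = 0 := by
        have h1 := hub v hvmem
        rw [hvval] at h1 ⊢
        linarith
      have hvmax : v ∈ maxFace E Y := by
        refine ⟨hvmem, fun x' hx' => ?_⟩
        rw [hvval0]; exact hub x' hx'
      rw [h] at hvmax
      have : v e.2 = 0 := by rw [Set.mem_singleton_iff.mp hvmax]; rfl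
      simp [hv, Pi.single_apply, (hE e he).symm] at this
    · intro h
      have hneg : ∀ e ∈ E, Y e.2 - Y e.1 < 0 := by
        intro e he
        have := h e he
        have h2 : (y e.2 : ℕ) < (y e.1 : ℕ) := this
        have h3 : Y e.2 < Y e.1 := by simp only [hY]; exact_mod_cast h2
        linarith
      ext x
      simp only [Set.mem_singleton_iff]
      constructor
      · rintro ⟨⟨lam, hlam, hx⟩, hmax⟩
        have hxval : ∑ i, x i * Y i = ∑ e ∈ E, lam e * (Y e.2 - Y e.1) := by
          rw [hx]; exact dgCone_val E lam Y
        have hge : 0 ≤ ∑ i, x i * Y i := by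
          have := hmax 0 (zero_mem_dgCone E)
          simpa using this
        have hall : ∀ e ∈ E, lam e * (Y e.2 - Y e.1) = 0 := by
          rw [hxval] at hge
          have hnp : ∀ e ∈ E, lam e * (Y e.2 - Y e.1) ≤ 0 := fun e he =>
            mul_nonpos_of_nonneg_of_nonpos (hlam e) (le_of_lt (hneg e he))
          have hsum0 : ∑ e ∈ E, lam e * (Y e.2 - Y e.1) = 0 :=
            le_antisymm (Finset.sum_nonpos hnp) hge
          exact (Finset.sum_eq_zero_iff_of_nonpos hnp).mp hsum0
        have hlam0 : ∀ e ∈ E, lam e = 0 := by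
          intro e he
          rcases mul_eq_zero.mp (hall e he) with h1 | h1
          · exact h1
          · exact absurd h1 (hneg e he).ne
        rw [hx]
        exact Finset.sum_eq_zero fun e he => by rw [hlam0 e he, zero_smul]
      · rintro rfl
        refine ⟨zero_mem_dgCone E, fun x' ⟨lam, hlam, hx'⟩ => ?_⟩
        rw [hx', dgCone_val E lam Y]
        simp only [Pi.zero_apply, zero_mul, Finset.sum_const_zero]
        exact Finset.sum_nonpos fun e he =>
          mul_nonpos_of_nonneg_of_nonpos (hlam e) (le_of_lt (hneg e he))
  refine ⟨key, ?_⟩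
  refine Nat.card_congr ?_
  refine (Equiv.subtypeEquivRight (fun y => key y)).trans ?_
  refine (Equiv.piCongrRight (fun _ : I => Fin.revPerm)).subtypeEquiv fun y => ?_
  constructor
  · intro h e he
    simpa using (Fin.rev_lt_rev).mpr (h e he)
  · intro h e he
    have := h e he
    simpa [Fin.rev_lt_rev] using this
end
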